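/- arXiv:1110.1785 — 12 statements merged into one kernel-verified Lean document; each statement's English description precedes it below -/
import Mathlib

section
/- For all urns i, j ∈ {1,…,n}, the gap in vote probabilities satisfies Δ_i(j) ≥ |i − j| / M. -/
/-- For all urns i, j ∈ {1,…,n}, the gap in vote probabilities
satisfies Δ_i(j) ≥ |i − j| / M. -/
theorem stmt_0
    (n : ℕ) (hn : 2 ≤ n)
    (p : ℕ → ℝ)
    (hp0 : 0 ≤ p 1) (hp1 : p n ≤ 1)
    (hmono : ∀ i ∈ Finset.Ico 1 n, p i < p (i + 1))
    (b r : ℕ → ℝ)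
    (hb : ∀ k, b k = ∑ ℓ ∈ Finset.Ico 1 k, (2 - (p (ℓ + 1) + p ℓ)) / (p (ℓ + 1) - p ℓ))
    (hr : ∀ k, r k = ∑ ℓ ∈ Finset.Ico k n, (p (ℓ + 1) + p ℓ) / (p (ℓ + 1) - p ℓ))
    (R B M : ℝ)
    (hR : R = ∑ k ∈ Finset.Icc 1 n, r k)
    (hB : B = ∑ k ∈ Finset.Icc 1 n, b k)
    (hM : M = max R B)
    (Rv Bv : ℕ → ℝ)
    (hRv : ∀ j, Rv j = (r j + (M - R) / n) / M)
    (hBv : ∀ j, Bv j = (b j + (M - B) / n) / M)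
    (E : ℕ → ℕ → ℝ)
    (hE : ∀ i j, E i j = p i * Bv j + (1 - p i) * Rv j) :
    ∀ i ∈ Finset.Icc 1 n, ∀ j ∈ Finset.Icc 1 n,
      |(i : ℝ) - (j : ℝ)| / M ≤ E i i - E i j := by
  -- monotonicity of p on [1, n]
  have hmono' : ∀ a b : ℕ, 1 ≤ a → a ≤ b → b ≤ n → p a ≤ p b := by
    intro a b ha hab hbn
    induction b with
    | zero => omega
    | succ m ih =>
      rcases eq_or_lt_of_le hab with h | h
      · rw [h]
      · have ham : a ≤ m := by omega
        have h1 : p a ≤ p m := ih ham (by omega)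
        have h2 : p m < p (m + 1) := hmono m (Finset.mem_Ico.mpr ⟨by omega, by omega⟩)
        linarith
  have hpos : ∀ ℓ : ℕ, 1 ≤ ℓ → ℓ ≤ n → 0 ≤ p ℓ := fun ℓ h1 h2 =>
    le_trans hp0 (hmono' 1 ℓ le_rfl h1 h2)
  -- each term in the r-sums is positive
  have hterm : ∀ ℓ : ℕ, 1 ≤ ℓ → ℓ + 1 ≤ n →
      0 < (p (ℓ + 1) + p ℓ) / (p (ℓ + 1) - p ℓ) := by
    intro ℓ h1 h2
    have hd : p ℓ < p (ℓ + 1) := hmono ℓ (Finset.mem_Ico.mpr ⟨h1, by omega⟩)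
    have h0 : 0 ≤ p ℓ := hpos ℓ h1 (by omega)
    exact div_pos (by linarith) (by linarith)
  have hRpos : 0 < R := by
    rw [hR]
    have h1 : ∀ k ∈ Finset.Icc 1 n, 0 ≤ r k := by
      intro k hk
      rw [hr]
      apply Finset.sum_nonneg
      intro ℓ hℓ
      simp only [Finset.mem_Ico] at hℓ
      simp only [Finset.mem_Icc] at hk
      exact le_of_lt (hterm ℓ (le_trans hk.1 hℓ.1) (by omega))
    have h2 : 0 < r 1 := by
      rw [hr]
      apply Finset.sum_pos
      · intro ℓ hℓ
        simp only [Finset.mem_Ico] at hℓ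
        exact hterm ℓ hℓ.1 (by omega)
      · exact ⟨1, Finset.mem_Ico.mpr ⟨le_rfl, by omega⟩⟩
    calc (0:ℝ) < r 1 := h2
    _ ≤ ∑ k ∈ Finset.Icc 1 n, r k :=
      Finset.single_le_sum h1 (Finset.mem_Icc.mpr ⟨le_rfl, by omega⟩)
  have hMpos : 0 < M := lt_of_lt_of_le hRpos (hM ▸ le_max_left R B)
  have hMne : M ≠ 0 := ne_of_gt hMpos
  intro i hi j hj
  simp only [Finset.mem_Icc] at hi hj
  -- express the difference
  have hdiff : E i i - E i j = (p i * (b i - b j) + (1 - p i) * (r i - r j)) / M := by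
    rw [hE, hE, hBv, hBv, hRv, hRv]
    field_simp
    ring
  rw [hdiff, div_le_div_iff_of_pos_right hMpos]
  -- core inequality
  rcases le_total j i with hji | hij
  · -- j ≤ i
    have habs : |(i : ℝ) - (j : ℝ)| = (i : ℝ) - j := by
      apply abs_of_nonneg; have := (Nat.cast_le (α := ℝ)).mpr hji; linarith
    rw [habs]
    have hbsplit : b i - b j = ∑ ℓ ∈ Finset.Ico j i, (2 - (p (ℓ + 1) + p ℓ)) / (p (ℓ + 1) - p ℓ) := by
      rw [hb, hb, ← Finset.sum_Ico_consecutive _ hj.1 hji]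
      ring
    have hrsplit : r i - r j = -∑ ℓ ∈ Finset.Ico j i, (p (ℓ + 1) + p ℓ) / (p (ℓ + 1) - p ℓ) := by
      rw [hr, hr, ← Finset.sum_Ico_consecutive _ hji hi.2]
      ring
    rw [hbsplit, hrsplit]
    have key : ∀ ℓ ∈ Finset.Ico j i, (1:ℝ) ≤
        p i * ((2 - (p (ℓ + 1) + p ℓ)) / (p (ℓ + 1) - p ℓ))
          - (1 - p i) * ((p (ℓ + 1) + p ℓ) / (p (ℓ + 1) - p ℓ)) := by
      intro ℓ hℓ
      simp only [Finset.mem_Ico] at hℓ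
      have h1 : 1 ≤ ℓ := le_trans hj.1 hℓ.1
      have hd : p ℓ < p (ℓ + 1) := hmono ℓ (Finset.mem_Ico.mpr ⟨h1, by omega⟩)
      have hle : p (ℓ + 1) ≤ p i := hmono' (ℓ + 1) i (by omega) (by omega) hi.2
      have heq : p i * ((2 - (p (ℓ + 1) + p ℓ)) / (p (ℓ + 1) - p ℓ))
          - (1 - p i) * ((p (ℓ + 1) + p ℓ) / (p (ℓ + 1) - p ℓ))
          = (2 * p i - (p (ℓ + 1) + p ℓ)) / (p (ℓ + 1) - p ℓ) := by
        field_simp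
        ring
      rw [heq, le_div_iff₀ (by linarith)]
      linarith
    calc (i:ℝ) - j = ∑ ℓ ∈ Finset.Ico j i, (1:ℝ) := by
          rw [Finset.sum_const, Nat.card_Ico, nsmul_eq_mul, mul_one]
          have := (Nat.cast_le (α := ℝ)).mpr hji
          push_cast [Nat.cast_sub hji]; ring
      _ ≤ ∑ ℓ ∈ Finset.Ico j i, (p i * ((2 - (p (ℓ + 1) + p ℓ)) / (p (ℓ + 1) - p ℓ))
          - (1 - p i) * ((p (ℓ + 1) + p ℓ) / (p (ℓ + 1) - p ℓ))) := Finset.sum_le_sum key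
      _ = p i * (∑ ℓ ∈ Finset.Ico j i, (2 - (p (ℓ + 1) + p ℓ)) / (p (ℓ + 1) - p ℓ))
          + (1 - p i) * -∑ ℓ ∈ Finset.Ico j i, (p (ℓ + 1) + p ℓ) / (p (ℓ + 1) - p ℓ) := by
          rw [Finset.sum_sub_distrib, ← Finset.mul_sum, ← Finset.mul_sum]; ring
  · -- i ≤ j
    have habs : |(i : ℝ) - (j : ℝ)| = (j : ℝ) - i := by
      rw [abs_sub_comm]
      apply abs_of_nonneg; have := (Nat.cast_le (α := ℝ)).mpr hij; linarith
    rw [habs]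
    have hbsplit : b i - b j = -∑ ℓ ∈ Finset.Ico i j, (2 - (p (ℓ + 1) + p ℓ)) / (p (ℓ + 1) - p ℓ) := by
      rw [hb, hb, ← Finset.sum_Ico_consecutive _ hi.1 hij]
      ring
    have hrsplit : r i - r j = ∑ ℓ ∈ Finset.Ico i j, (p (ℓ + 1) + p ℓ) / (p (ℓ + 1) - p ℓ) := by
      rw [hr, hr, ← Finset.sum_Ico_consecutive _ hij hj.2]
      ring
    rw [hbsplit, hrsplit]
    have key : ∀ ℓ ∈ Finset.Ico i j, (1:ℝ) ≤
        (1 - p i) * ((p (ℓ + 1) + p ℓ) / (p (ℓ + 1) - p ℓ))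
          - p i * ((2 - (p (ℓ + 1) + p ℓ)) / (p (ℓ + 1) - p ℓ)) := by
      intro ℓ hℓ
      simp only [Finset.mem_Ico] at hℓ
      have h1 : 1 ≤ ℓ := le_trans hi.1 hℓ.1
      have hd : p ℓ < p (ℓ + 1) := hmono ℓ (Finset.mem_Ico.mpr ⟨h1, by omega⟩)
      have hle : p i ≤ p ℓ := hmono' i ℓ hi.1 hℓ.1 (by omega)
      have heq : (1 - p i) * ((p (ℓ + 1) + p ℓ) / (p (ℓ + 1) - p ℓ))
          - p i * ((2 - (p (ℓ + 1) + p ℓ)) / (p (ℓ + 1) - p ℓ))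
          = ((p (ℓ + 1) + p ℓ) - 2 * p i) / (p (ℓ + 1) - p ℓ) := by
        field_simp
        ring
      rw [heq, le_div_iff₀ (by linarith)]
      linarith
    calc (j:ℝ) - i = ∑ ℓ ∈ Finset.Ico i j, (1:ℝ) := by
          rw [Finset.sum_const, Nat.card_Ico, nsmul_eq_mul, mul_one]
          push_cast [Nat.cast_sub hij]; ring
      _ ≤ ∑ ℓ ∈ Finset.Ico i j, ((1 - p i) * ((p (ℓ + 1) + p ℓ) / (p (ℓ + 1) - p ℓ))
          - p i * ((2 - (p (ℓ + 1) + p ℓ)) / (p (ℓ + 1) - p ℓ))) := Finset.sum_le_sum key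
      _ = p i * -∑ ℓ ∈ Finset.Ico i j, (2 - (p (ℓ + 1) + p ℓ)) / (p (ℓ + 1) - p ℓ)
          + (1 - p i) * ∑ ℓ ∈ Finset.Ico i j, (p (ℓ + 1) + p ℓ) / (p (ℓ + 1) - p ℓ) := by
          rw [Finset.sum_sub_distrib, ← Finset.mul_sum, ← Finset.mul_sum]; ring
end

section
/- For every urn i ∈ {1,…,n}, the probability that a voter votes for the correct urn i satisfies 1/n ≤ E_i(i) ≤ 4n/(ε·M). -/
/-!
Write `φ_q(k) = q b_k + (1 - q) r_k`. Its increment `φ_q(k+1) - φ_q(k)` is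
`(2q - p_k - p_{k+1}) / (p_{k+1} - p_k)`, so for `q = p_i` the potential increases up to `k = i`
and decreases afterwards: a voter holding urn `i` scores best by naming `i`. The normalization
defining `E_i(·)` is an increasing affine change of `φ_{p_i}`, so `E_i(i)` is the largest entry of
a probability vector on `n` points, hence at least `1/n`.

For the upper bound, every summand of `b_k` and `r_k` has numerator in `[0, 2]` and denominator at
least `ε`, so `b_k, r_k ≤ K := 2n/ε`, `M ≤ nK`, and both normalized entries at `i` are at most
`2K/M = 4n/(εM)`.
-/

open Finset

namespace UrnVoting

noncomputable section

section FinsetSums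

variable {ι : Type*} {s : Finset ι}

lemma sum_mem_Icc_of_card_le {f : ι → ℝ} {c : ℝ} {m : ℕ} (hc : 0 ≤ c) (hs : #s ≤ m)
    (hf : ∀ i ∈ s, f i ∈ Set.Icc 0 c) : ∑ i ∈ s, f i ∈ Set.Icc 0 (m * c) :=
  ⟨sum_nonneg fun i hi => (hf i hi).1,
    (sum_le_card_nsmul s f c fun i hi => (hf i hi).2).trans
      (by rw [nsmul_eq_mul]; gcongr)⟩

lemma sum_add_sub_sum_div_card_div_eq_one (hs : s.Nonempty) (f : ι → ℝ) {M : ℝ} (hM : M ≠ 0) :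
    ∑ j ∈ s, (f j + (M - ∑ k ∈ s, f k) / #s) / M = 1 := by
  have hcard : (#s : ℝ) ≠ 0 := Nat.cast_ne_zero.2 hs.card_pos.ne'
  rw [← sum_div, sum_add_distrib, sum_const, nsmul_eq_mul, mul_div_cancel₀ _ hcard,
    add_sub_cancel, div_self hM]

lemma one_div_card_le_of_sum_eq_one {g : ι → ℝ} {i : ι} (hsum : ∑ j ∈ s, g j = 1)
    (hmax : ∀ j ∈ s, g j ≤ g i) : 1 / (#s : ℝ) ≤ g i := by
  have hle : (1 : ℝ) ≤ #s * g i := by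
    rw [← hsum, ← nsmul_eq_mul]
    exact sum_le_card_nsmul s g (g i) hmax
  have hs : (0 : ℝ) < #s :=
    Nat.cast_pos.2 (card_pos.2 (nonempty_of_sum_ne_zero (f := g) (hsum ▸ one_ne_zero)))
  rw [div_le_iff₀ hs]
  linarith

end FinsetSums

lemma add_sub_div_div_le {x S M K : ℝ} {n : ℕ} (hn : 0 < n) (hM : 0 < M) (hx : x ≤ K)
    (hS : 0 ≤ S) (hMK : M ≤ n * K) : (x + (M - S) / n) / M ≤ 2 * K / M := by
  have hn' : (0 : ℝ) < n := Nat.cast_pos.2 hn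
  have : (M - S) / n ≤ K := (div_le_iff₀ hn').2 (by linarith)
  exact div_le_div_of_nonneg_right (by linarith) hM.le

def blueStep (p : ℕ → ℝ) (ℓ : ℕ) : ℝ := (2 - (p (ℓ + 1) + p ℓ)) / (p (ℓ + 1) - p ℓ)

def redStep (p : ℕ → ℝ) (ℓ : ℕ) : ℝ := (p (ℓ + 1) + p ℓ) / (p (ℓ + 1) - p ℓ)

def blueScore (p : ℕ → ℝ) (k : ℕ) : ℝ := ∑ ℓ ∈ Ico 1 k, blueStep p ℓ

def redScore (p : ℕ → ℝ) (n k : ℕ) : ℝ := ∑ ℓ ∈ Ico k n, redStep p ℓ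

def score (p : ℕ → ℝ) (n : ℕ) (q : ℝ) (k : ℕ) : ℝ :=
  q * blueScore p k + (1 - q) * redScore p n k

variable {p : ℕ → ℝ} {n : ℕ}

lemma score_succ_sub_score (q : ℝ) {k : ℕ} (hk : 1 ≤ k) (hkn : k < n) :
    score p n q (k + 1) - score p n q k = (2 * q - (p (k + 1) + p k)) / (p (k + 1) - p k) := by
  rw [score, score, blueScore, blueScore, sum_Ico_succ_top hk, redScore, redScore,
    sum_eq_sum_Ico_succ_bot hkn, blueStep, redStep]
  ring

lemma score_le_score_self (hp : MonotoneOn p (Set.Icc 1 n)) {i j : ℕ}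
    (hi : i ∈ Set.Icc 1 n) (hj : j ∈ Set.Icc 1 n) :
    score p n (p i) j ≤ score p n (p i) i := by
  obtain ⟨hi1, hin⟩ := hi
  obtain ⟨hj1, hjn⟩ := hj
  have hle {a b : ℕ} (ha : 1 ≤ a) (hab : a ≤ b) (hb : b ≤ n) : p a ≤ p b :=
    hp ⟨ha, hab.trans hb⟩ ⟨ha.trans hab, hb⟩ hab
  rcases le_total j i with hji | hij
  · have hmono : MonotoneOn (score p n (p i)) (Set.Icc 1 i) := by
      refine monotoneOn_of_le_add_one Set.ordConnected_Icc fun k _ ⟨hk1, _⟩ ⟨_, hki⟩ => ?_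
      rw [← sub_nonneg, score_succ_sub_score _ hk1 (by omega)]
      have hk := hle hk1 (by omega : k ≤ i) hin
      have hk' := hle (by omega) hki hin
      exact div_nonneg (by linarith) (sub_nonneg.2 (hle hk1 (by omega) (by omega)))
    exact hmono ⟨hj1, hji⟩ ⟨hi1, le_rfl⟩ hji
  · have hanti : AntitoneOn (score p n (p i)) (Set.Icc i n) := by
      refine antitoneOn_of_add_one_le Set.ordConnected_Icc fun k _ ⟨hik, _⟩ ⟨_, hkn⟩ => ?_
      rw [← sub_nonpos, score_succ_sub_score _ (by omega) (by omega)]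
      have hk := hle hi1 hik (by omega)
      have hk' := hle hi1 (by omega) hkn
      exact div_nonpos_of_nonpos_of_nonneg (by linarith)
        (sub_nonneg.2 (hle (by omega) (by omega) hkn))
    exact hanti ⟨le_rfl, hin⟩ ⟨hij, hjn⟩ hij

section Bounds

variable {ε : ℝ} (hp : ∀ ℓ ∈ Set.Icc 1 n, p ℓ ∈ Set.Icc 0 1) (hε : 0 < ε)
  (hgap : ∀ ℓ ∈ Ico 1 n, ε ≤ p (ℓ + 1) - p ℓ)
include hp hε hgap

lemma redStep_mem_Icc {ℓ : ℕ} (hℓ : ℓ ∈ Ico 1 n) : redStep p ℓ ∈ Set.Icc 0 (2 / ε) := by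
  rw [mem_Ico] at hℓ
  have h₀ := hp ℓ ⟨hℓ.1, hℓ.2.le⟩
  have h₁ := hp (ℓ + 1) ⟨by omega, hℓ.2⟩
  have hd := hgap ℓ (mem_Ico.2 hℓ)
  exact ⟨div_nonneg (by linarith [h₀.1, h₁.1]) (by linarith),
    div_le_div₀ zero_le_two (by linarith [h₀.2, h₁.2]) hε hd⟩

lemma blueStep_mem_Icc {ℓ : ℕ} (hℓ : ℓ ∈ Ico 1 n) : blueStep p ℓ ∈ Set.Icc 0 (2 / ε) := by
  rw [mem_Ico] at hℓ
  have h₀ := hp ℓ ⟨hℓ.1, hℓ.2.le⟩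
  have h₁ := hp (ℓ + 1) ⟨by omega, hℓ.2⟩
  have hd := hgap ℓ (mem_Ico.2 hℓ)
  exact ⟨div_nonneg (by linarith [h₀.2, h₁.2]) (by linarith),
    div_le_div₀ zero_le_two (by linarith [h₀.1, h₁.1]) hε hd⟩

lemma blueScore_mem_Icc {k : ℕ} (hk : k ≤ n) : blueScore p k ∈ Set.Icc 0 (n * (2 / ε)) :=
  sum_mem_Icc_of_card_le (by positivity) (by simp; omega) fun _ hℓ =>
    blueStep_mem_Icc hp hε hgap (Ico_subset_Ico_right hk hℓ)

lemma redScore_mem_Icc {k : ℕ} (hk : 1 ≤ k) : redScore p n k ∈ Set.Icc 0 (n * (2 / ε)) :=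
  sum_mem_Icc_of_card_le (by positivity) (by simp) fun _ hℓ =>
    redStep_mem_Icc hp hε hgap (Ico_subset_Ico_left hk hℓ)

lemma sum_blueScore_mem_Icc :
    ∑ k ∈ Icc 1 n, blueScore p k ∈ Set.Icc 0 (n * (n * (2 / ε))) :=
  sum_mem_Icc_of_card_le (by positivity) (by simp) fun _ hk =>
    blueScore_mem_Icc hp hε hgap (mem_Icc.1 hk).2

lemma sum_redScore_mem_Icc :
    ∑ k ∈ Icc 1 n, redScore p n k ∈ Set.Icc 0 (n * (n * (2 / ε))) :=
  sum_mem_Icc_of_card_le (by positivity) (by simp) fun _ hk =>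
    redScore_mem_Icc hp hε hgap (mem_Icc.1 hk).1

lemma sum_redScore_pos (hn : 2 ≤ n) : 0 < ∑ k ∈ Icc 1 n, redScore p n k := by
  have hstep : 0 < redStep p 1 := by
    have h₁ := hp 1 ⟨le_rfl, by omega⟩
    have h₂ := hgap 1 (mem_Ico.2 ⟨le_rfl, by omega⟩)
    exact div_pos (by linarith [h₁.1]) (by linarith)
  have hscore : 0 < redScore p n 1 :=
    sum_pos' (fun _ hℓ => (redStep_mem_Icc hp hε hgap hℓ).1)
      ⟨1, mem_Ico.2 ⟨le_rfl, by omega⟩, hstep⟩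
  exact hscore.trans_le <| single_le_sum
    (fun k hk => (redScore_mem_Icc hp hε hgap (mem_Icc.1 hk).1).1) (mem_Icc.2 ⟨le_rfl, by omega⟩)

end Bounds

/-- `normalized n M r` and `normalized n M b` are the paper's `R_·` and `B_·`, and
`voteProb p n M i j` is `E_i(j)`. -/
def normalized (n : ℕ) (M : ℝ) (f : ℕ → ℝ) (j : ℕ) : ℝ :=
  (f j + (M - ∑ k ∈ Icc 1 n, f k) / n) / M

def voteProb (p : ℕ → ℝ) (n : ℕ) (M : ℝ) (i j : ℕ) : ℝ :=
  p i * normalized n M (blueScore p) j + (1 - p i) * normalized n M (redScore p n) j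

variable {M : ℝ}

lemma sum_normalized (hn : 1 ≤ n) (hM : M ≠ 0) (f : ℕ → ℝ) :
    ∑ j ∈ Icc 1 n, normalized n M f j = 1 := by
  simpa only [normalized, Nat.card_Icc, Nat.add_sub_cancel] using
    sum_add_sub_sum_div_card_div_eq_one ⟨1, mem_Icc.2 ⟨le_rfl, hn⟩⟩ f hM

lemma sum_voteProb (hn : 1 ≤ n) (hM : M ≠ 0) (i : ℕ) : ∑ j ∈ Icc 1 n, voteProb p n M i j = 1 := by
  simp only [voteProb, sum_add_distrib, ← mul_sum, sum_normalized hn hM]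
  ring

lemma voteProb_sub_voteProb (i j : ℕ) :
    voteProb p n M i i - voteProb p n M i j = (score p n (p i) i - score p n (p i) j) / M := by
  simp only [voteProb, normalized, score]
  ring

lemma voteProb_le_voteProb_self (hp : MonotoneOn p (Set.Icc 1 n)) (hM : 0 ≤ M) {i j : ℕ}
    (hi : i ∈ Set.Icc 1 n) (hj : j ∈ Set.Icc 1 n) : voteProb p n M i j ≤ voteProb p n M i i := by
  rw [← sub_nonneg, voteProb_sub_voteProb]
  exact div_nonneg (sub_nonneg.2 (score_le_score_self hp hi hj)) hM

lemma one_div_le_voteProb_self (hp : MonotoneOn p (Set.Icc 1 n)) (hM : 0 < M) {i : ℕ}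
    (hi : i ∈ Set.Icc 1 n) : 1 / (n : ℝ) ≤ voteProb p n M i i := by
  simpa using one_div_card_le_of_sum_eq_one (sum_voteProb (hi.1.trans hi.2) hM.ne' i)
    fun j hj => voteProb_le_voteProb_self hp hM.le hi (mem_Icc.1 hj)

lemma voteProb_self_le {ε : ℝ} (hn : 2 ≤ n) (hp : ∀ ℓ ∈ Set.Icc 1 n, p ℓ ∈ Set.Icc 0 1)
    (hε : 0 < ε) (hgap : ∀ ℓ ∈ Ico 1 n, ε ≤ p (ℓ + 1) - p ℓ)
    (hM : M = max (∑ k ∈ Icc 1 n, redScore p n k) (∑ k ∈ Icc 1 n, blueScore p k))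
    {i : ℕ} (hi : i ∈ Set.Icc 1 n) : voteProb p n M i i ≤ 4 * n / (ε * M) := by
  have hBs := sum_blueScore_mem_Icc hp hε hgap
  have hRs := sum_redScore_mem_Icc hp hε hgap
  have hMpos : 0 < M := hM ▸ lt_max_of_lt_left (sum_redScore_pos hp hε hgap hn)
  have hMK : M ≤ n * (n * (2 / ε)) := hM ▸ max_le hRs.2 hBs.2
  have hBi := add_sub_div_div_le (by omega) hMpos (blueScore_mem_Icc hp hε hgap hi.2).2 hBs.1 hMK
  have hRi := add_sub_div_div_le (by omega) hMpos (redScore_mem_Icc hp hε hgap hi.1).2 hRs.1 hMK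
  have hpi := hp i hi
  calc voteProb p n M i i
      ≤ p i * (2 * (n * (2 / ε)) / M) + (1 - p i) * (2 * (n * (2 / ε)) / M) := by
        unfold voteProb normalized
        gcongr <;> linarith [hpi.1, hpi.2]
    _ = 4 * n / (ε * M) := by field_simp; ring

end

end UrnVoting

open UrnVoting

/-- For every urn i ∈ {1,…,n}, the probability that a voter votes for the
correct urn i satisfies 1/n ≤ E_i(i) ≤ 4n/(ε·M). -/
theorem stmt_2
    (n : ℕ) (hn : 2 ≤ n)
    (p : ℕ → ℝ)
    (hp0 : 0 ≤ p 1) (hp1 : p n ≤ 1)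
    (hmono : ∀ i ∈ Finset.Ico 1 n, p i < p (i + 1))
    (ε : ℝ)
    (hε : IsLeast {x : ℝ | ∃ i, 1 ≤ i ∧ i < n ∧ x = p (i + 1) - p i} ε)
    (b r : ℕ → ℝ)
    (hb : ∀ k, b k = ∑ ℓ ∈ Finset.Ico 1 k, (2 - (p (ℓ + 1) + p ℓ)) / (p (ℓ + 1) - p ℓ))
    (hr : ∀ k, r k = ∑ ℓ ∈ Finset.Ico k n, (p (ℓ + 1) + p ℓ) / (p (ℓ + 1) - p ℓ))
    (R B M : ℝ)
    (hR : R = ∑ k ∈ Finset.Icc 1 n, r k)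
    (hB : B = ∑ k ∈ Finset.Icc 1 n, b k)
    (hM : M = max R B)
    (Rv Bv : ℕ → ℝ)
    (hRv : ∀ j, Rv j = (r j + (M - R) / n) / M)
    (hBv : ∀ j, Bv j = (b j + (M - B) / n) / M)
    (E : ℕ → ℕ → ℝ)
    (hE : ∀ i j, E i j = p i * Bv j + (1 - p i) * Rv j) :
    ∀ i ∈ Finset.Icc 1 n, 1 / (n : ℝ) ≤ E i i ∧ E i i ≤ 4 * n / (ε * M) := by
  obtain rfl : b = blueScore p := funext hb
  obtain rfl : r = redScore p n := funext hr
  subst hR hB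
  obtain rfl : Bv = normalized n M (blueScore p) := funext hBv
  obtain rfl : Rv = normalized n M (redScore p n) := funext hRv
  obtain rfl : E = voteProb p n M := funext fun i => funext (hE i)
  have hpmono : MonotoneOn p (Set.Icc 1 n) :=
    (strictMonoOn_of_lt_add_one Set.ordConnected_Icc fun k _ hk hk' =>
      hmono k (mem_Ico.2 ⟨hk.1, hk'.2⟩)).monotoneOn
  have hp : ∀ ℓ ∈ Set.Icc 1 n, p ℓ ∈ Set.Icc 0 1 := fun ℓ hℓ =>
    ⟨hp0.trans (hpmono ⟨le_rfl, by omega⟩ hℓ hℓ.1),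
      (hpmono hℓ ⟨by omega, le_rfl⟩ hℓ.2).trans hp1⟩
  have hεpos : 0 < ε := by
    obtain ⟨i, hi, hin, rfl⟩ := hε.1
    exact sub_pos.2 (hmono i (mem_Ico.2 ⟨hi, hin⟩))
  have hgap : ∀ ℓ ∈ Ico 1 n, ε ≤ p (ℓ + 1) - p ℓ := fun ℓ hℓ =>
    hε.2 ⟨ℓ, (mem_Ico.1 hℓ).1, (mem_Ico.1 hℓ).2, rfl⟩
  have hMpos : 0 < M := hM ▸ lt_max_of_lt_left (sum_redScore_pos hp hεpos hgap hn)
  intro i hi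
  exact ⟨one_div_le_voteProb_self hpmono hMpos (mem_Icc.1 hi),
    voteProb_self_le hn hp hεpos hgap hM (mem_Icc.1 hi)⟩
end

section
/- Let n ≥ 2, C ≥ 2 be integers and let P_1,…,P_n be pairwise distinct probability distributions on a set of C colors, with P_i = (p_{i,1},…,p_{i,C}); set ε = min_{i ≠ j} Σ_{c=1}^{C} |p_{i,c} − p_{j,c}| > 0. Let T = ⌈log₃ C⌉ + 1 and let η ∈ (0,1). Then there exist an integer m ≤ ⌈7·10^{12} · C²·T² · n³ · ε^{−2} · ln(n/η)⌉ and probability distributions σ_1,…,σ_C on {1,…,n} (a symmetric randomized strategy: a voter who observes color c votes for an urn drawn from σ_c) such that for every i ∈ {1,…,n}: if m voters independently each first draw a color c according to P_i and then vote for an urn drawn from σ_c, then with probability at least 1 − η urn i receives strictly more votes than every other urn. -/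
/-!
If each voter votes for urn `j` with probability `σ_c(j)` after seeing color `c`, then under urn `i`
the votes are i.i.d. with law `Q_i(j) = ∑_c P_i(c) σ_c(j)`, and urn `i` wins as soon as
`Q_i(i) - Q_i(j) ≥ γ > 0` for every `j ≠ i` and enough voters are polled: a Chernoff bound
(exponential tilting by `x` on votes for `j` and `x⁻¹` on votes for `i`) makes each of the `n - 1`
ties `#i ≤ #j` exponentially unlikely, and a union bound finishes.

The strategy is `σ_c(j) = 1/n + (a_j(c) - mean_k a_k(c)) / (4n²)` (`tangentCoeff` is `a`), where
for a distribution `x` the sum `∑_c x(c) a_j(c)` equals `∑_u ∑_c sign(P_j(c) - P_u(c)) (x(c) - P_u(c))`: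
a linear minorant of `D(x) = ∑_u ‖x - P_u‖₁` that is exact at `P_j` and falls short of `D(P_i)` by
at least `‖P_i - P_j‖₁ ≥ ε`, its summand `u = j` being zero. Hence `γ = ε / (4n²)`; and
`|a_j(c)| ≤ 2n` puts every `σ_c(j)`, hence every `Q_i(j)`, in `[0, 2/n]`, so the Chernoff exponent
per voter is `γ² n / 8 = ε² / (128 n³)`.
-/

open Finset Real

noncomputable section

section iidProb

variable {α : Type*} {s : Finset α} {Q : α → ℝ} {m : ℕ}

open Classical in
def iidProb (s : Finset α) (Q : α → ℝ) (m : ℕ) (E : (Fin m → α) → Prop) : ℝ :=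
  ∑ v ∈ Fintype.piFinset (fun _ : Fin m => s), if E v then ∏ t, Q (v t) else 0

lemma sum_piFinset_prod_eq_pow (s : Finset α) (f : α → ℝ) (m : ℕ) :
    ∑ v ∈ Fintype.piFinset (fun _ : Fin m => s), ∏ t, f (v t) = (∑ u ∈ s, f u) ^ m := by
  rw [← prod_univ_sum, prod_const, card_univ, Fintype.card_fin]

lemma prod_nonneg_of_mem_piFinset (hQ0 : ∀ u ∈ s, 0 ≤ Q u) {v : Fin m → α}
    (hv : v ∈ Fintype.piFinset fun _ => s) : 0 ≤ ∏ t, Q (v t) :=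
  prod_nonneg fun t _ => hQ0 _ (Fintype.mem_piFinset.mp hv t)

lemma iidProb_add_iidProb_not (hQ1 : ∑ u ∈ s, Q u = 1) (E : (Fin m → α) → Prop) :
    iidProb s Q m E + iidProb s Q m (¬ E ·) = 1 := by
  rw [iidProb, iidProb, ← sum_add_distrib, ← one_pow m, ← hQ1, ← sum_piFinset_prod_eq_pow]
  refine sum_congr rfl fun v _ => ?_
  by_cases h : E v <;> simp [h]

lemma one_sub_sum_iidProb_le {ι : Type*} (hQ0 : ∀ u ∈ s, 0 ≤ Q u) (hQ1 : ∑ u ∈ s, Q u = 1)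
    (E : (Fin m → α) → Prop) (J : Finset ι) (F : ι → (Fin m → α) → Prop)
    (hcover : ∀ v, ¬ E v → ∃ j ∈ J, F j v) :
    1 - ∑ j ∈ J, iidProb s Q m (F j) ≤ iidProb s Q m E := by
  classical
  suffices iidProb s Q m (¬ E ·) ≤ ∑ j ∈ J, iidProb s Q m (F j) by
    linarith [iidProb_add_iidProb_not hQ1 E]
  unfold iidProb
  rw [sum_comm]
  refine sum_le_sum fun v hv => ?_
  have hterm : ∀ j ∈ J, 0 ≤ if F j v then ∏ t, Q (v t) else 0 := fun j _ => by
    split_ifs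
    exacts [prod_nonneg_of_mem_piFinset hQ0 hv, le_rfl]
  split_ifs with hE
  · obtain ⟨j, hj, hF⟩ := hcover v hE
    simpa [hF] using single_le_sum hterm hj
  · exact sum_nonneg hterm

lemma inv_one_add_le {τ : ℝ} (hτ : 0 ≤ τ) : (1 + τ)⁻¹ ≤ 1 - τ + τ ^ 2 := by
  rw [inv_le_iff_one_le_mul₀ (by positivity)]
  nlinarith [pow_nonneg hτ 3]

lemma iidProb_count_le_le_exp [DecidableEq α] (hQ0 : ∀ u ∈ s, 0 ≤ Q u) (hQ1 : ∑ u ∈ s, Q u = 1)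
    {i j : α} (hi : i ∈ s) (hj : j ∈ s) (hij : i ≠ j) {b γ : ℝ} (hb : 0 < b) (hQi : Q i ≤ b)
    (hγ : 0 ≤ γ) (hgap : γ ≤ Q i - Q j) (m : ℕ) :
    iidProb s Q m (fun v => #{t | v t = i} ≤ #{t | v t = j}) ≤
      exp (-(m * (γ ^ 2 / (4 * b)))) := by
  set τ := γ / (2 * b)
  have hτ : 0 ≤ τ := by positivity
  set x := 1 + τ
  have hx : 1 ≤ x := le_add_of_nonneg_right hτ
  let ρ : α → ℝ := fun u => x ^ (if u = j then 1 else 0) * x⁻¹ ^ (if u = i then 1 else 0)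
  have hρ : ∀ u, ρ u = 1 + (if u = j then τ else 0) + (if u = i then x⁻¹ - 1 else 0) := by
    intro u
    by_cases huj : u = j
    · simp [ρ, huj, hij.symm, x]
    · by_cases hui : u = i <;> simp [ρ, huj, hui, hij]
  have hprod : ∀ v : Fin m → α, ∏ t, ρ (v t) = x ^ #{t | v t = j} * x⁻¹ ^ #{t | v t = i} := by
    intro v
    simp only [ρ, prod_mul_distrib, prod_pow_eq_pow_sum, sum_boole, Nat.cast_id]
  have hmgf : ∑ u ∈ s, ρ u * Q u = 1 + τ * Q j + (x⁻¹ - 1) * Q i := by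
    simp only [hρ, add_mul, one_mul, ite_mul, zero_mul, sum_add_distrib, sum_ite_eq', hi, hj,
      if_true, hQ1]
  have hmgf_le : ∑ u ∈ s, ρ u * Q u ≤ exp (-(γ ^ 2 / (4 * b))) := by
    have hinv : x⁻¹ - 1 ≤ -τ + τ ^ 2 := by linarith [inv_one_add_le hτ]
    calc ∑ u ∈ s, ρ u * Q u ≤ 1 - τ * (Q i - Q j) + τ ^ 2 * Q i := by
          rw [hmgf]; nlinarith [hQ0 i hi]
      _ ≤ 1 - τ * γ + τ ^ 2 * b := by gcongr
      _ = -(γ ^ 2 / (4 * b)) + 1 := by simp only [τ]; field_simp; ring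
      _ ≤ exp (-(γ ^ 2 / (4 * b))) := add_one_le_exp _
  calc iidProb s Q m _ ≤ ∑ v ∈ Fintype.piFinset (fun _ : Fin m => s), ∏ t, ρ (v t) * Q (v t) := by
        refine sum_le_sum fun v hv => ?_
        rw [prod_mul_distrib]
        have hQv := prod_nonneg_of_mem_piFinset hQ0 hv
        split_ifs with hcount
        · refine le_mul_of_one_le_left hQv ?_
          rw [hprod, inv_pow, ← div_eq_mul_inv, one_le_div₀ (by positivity)]
          exact pow_le_pow_right₀ hx hcount
        · exact mul_nonneg (prod_nonneg fun t _ => by positivity) hQv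
    _ = (∑ u ∈ s, ρ u * Q u) ^ m := sum_piFinset_prod_eq_pow s (fun u => ρ u * Q u) m
    _ ≤ exp (-(γ ^ 2 / (4 * b))) ^ m :=
        pow_le_pow_left₀ (sum_nonneg fun u hu => mul_nonneg (by positivity) (hQ0 u hu)) hmgf_le m
    _ = exp (-(m * (γ ^ 2 / (4 * b)))) := by rw [← exp_nat_mul]; ring_nf

lemma one_sub_card_mul_exp_le_iidProb_wins [DecidableEq α] (hQ0 : ∀ u ∈ s, 0 ≤ Q u)
    (hQ1 : ∑ u ∈ s, Q u = 1) {i : α} (hi : i ∈ s) {b γ : ℝ} (hb : 0 < b) (hQi : Q i ≤ b)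
    (hγ : 0 ≤ γ) (hgap : ∀ j ∈ s, j ≠ i → γ ≤ Q i - Q j) (m : ℕ) :
    1 - #s * exp (-(m * (γ ^ 2 / (4 * b)))) ≤
      iidProb s Q m (fun v => ∀ j ∈ s, j ≠ i → #{t | v t = j} < #{t | v t = i}) := by
  refine le_trans ?_ (one_sub_sum_iidProb_le hQ0 hQ1 _ (s.erase i)
    (fun j v => #{t | v t = i} ≤ #{t | v t = j}) fun v hv => ?_)
  · gcongr
    calc ∑ j ∈ s.erase i, iidProb s Q m (fun v => #{t | v t = i} ≤ #{t | v t = j})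
        ≤ ∑ _j ∈ s.erase i, exp (-(m * (γ ^ 2 / (4 * b)))) := by
          refine sum_le_sum fun j hj => ?_
          obtain ⟨hji, hjs⟩ := mem_erase.mp hj
          exact iidProb_count_le_le_exp hQ0 hQ1 hi hjs hji.symm hb hQi hγ (hgap j hjs hji) m
      _ ≤ #s * exp (-(m * (γ ^ 2 / (4 * b)))) := by
          rw [sum_const, nsmul_eq_mul]
          gcongr
          exact erase_subset i s
  · push Not at hv
    obtain ⟨j, hj, hji, hcount⟩ := hv
    exact ⟨j, mem_erase.mpr ⟨hji, hj⟩, hcount⟩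

end iidProb

lemma SignType.coe_mul_le_abs (σ : SignType) (y : ℝ) : (σ : ℝ) * y ≤ |y| := by
  cases σ <;> simp [le_abs_self, neg_le_abs]

lemma SignType.abs_coe_le_one (σ : SignType) : |(σ : ℝ)| ≤ 1 := by
  cases σ <;> simp

section strategy

variable {ι κ : Type*} (U : Finset ι) (K : Finset κ) (P : ι → κ → ℝ)

def tangentCoeff (j : ι) (c : κ) : ℝ :=
  ∑ u ∈ U, (SignType.sign (P j c - P u c) - ∑ d ∈ K, SignType.sign (P j d - P u d) * P u d)

lemma sum_mul_tangentCoeff {x : κ → ℝ} (hx : ∑ c ∈ K, x c = 1) (j : ι) :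
    ∑ c ∈ K, x c * tangentCoeff U K P j c =
      ∑ u ∈ U, ∑ c ∈ K, SignType.sign (P j c - P u c) * (x c - P u c) := by
  simp only [tangentCoeff, mul_sum (s := U)]
  rw [sum_comm]
  refine sum_congr rfl fun u _ => ?_
  simp only [mul_sub, sum_sub_distrib, ← sum_mul, hx, one_mul]
  simp only [mul_comm (x _)]

variable {U K P}

lemma abs_tangentCoeff_le (hP0 : ∀ i ∈ U, ∀ c ∈ K, 0 ≤ P i c)
    (hP1 : ∀ i ∈ U, ∑ c ∈ K, P i c = 1) (j : ι) (c : κ) :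
    |tangentCoeff U K P j c| ≤ 2 * #U := by
  have hterm : ∀ u ∈ U, |SignType.sign (P j c - P u c) -
      ∑ d ∈ K, SignType.sign (P j d - P u d) * P u d| ≤ 2 := fun u hu =>
    calc _ ≤ |(SignType.sign (P j c - P u c) : ℝ)| +
          ∑ d ∈ K, |(SignType.sign (P j d - P u d) : ℝ) * P u d| :=
          (abs_sub _ _).trans (by gcongr; exact abs_sum_le_sum_abs _ _)
      _ ≤ 1 + ∑ d ∈ K, P u d := by
          gcongr with d hd
          · exact SignType.abs_coe_le_one _
          · rw [abs_mul, abs_of_nonneg (hP0 u hu d hd)]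
            exact mul_le_of_le_one_left (hP0 u hu d hd) (SignType.abs_coe_le_one _)
      _ = 2 := by rw [hP1 u hu]; norm_num
  calc |tangentCoeff U K P j c| ≤ ∑ _u ∈ U, (2 : ℝ) :=
        (abs_sum_le_sum_abs _ _).trans (sum_le_sum hterm)
    _ = 2 * #U := by rw [sum_const, nsmul_eq_mul, mul_comm]

lemma sum_mul_tangentCoeff_add_dist_le (hP1 : ∀ i ∈ U, ∑ c ∈ K, P i c = 1) {i j : ι}
    (hi : i ∈ U) (hj : j ∈ U) :
    ∑ c ∈ K, P i c * tangentCoeff U K P j c + ∑ c ∈ K, |P i c - P j c| ≤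
      ∑ c ∈ K, P i c * tangentCoeff U K P i c := by
  rw [sum_mul_tangentCoeff U K P (hP1 i hi), sum_mul_tangentCoeff U K P (hP1 i hi)]
  simp only [sign_mul_self]
  have hgap : ∀ u ∈ U, 0 ≤ ∑ c ∈ K, |P i c - P u c| -
      ∑ c ∈ K, SignType.sign (P j c - P u c) * (P i c - P u c) := fun u _ =>
    sub_nonneg.mpr (sum_le_sum fun c _ => SignType.coe_mul_le_abs _ _)
  have := single_le_sum hgap hj
  simp only [sub_self, _root_.sign_zero, SignType.coe_zero, zero_mul, sum_const_zero,
    sub_zero, sum_sub_distrib] at this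
  linarith

variable (U K P) in
def signStrategy (c : κ) (j : ι) : ℝ :=
  1 / #U + (tangentCoeff U K P j c - (∑ k ∈ U, tangentCoeff U K P k c) / #U) / (4 * #U ^ 2)

lemma abs_signStrategy_sub_le (hU : U.Nonempty) (hP0 : ∀ i ∈ U, ∀ c ∈ K, 0 ≤ P i c)
    (hP1 : ∀ i ∈ U, ∑ c ∈ K, P i c = 1) (c : κ) (j : ι) :
    |signStrategy U K P c j - 1 / #U| ≤ 1 / #U := by
  have hn : (0 : ℝ) < #U := by exact_mod_cast hU.card_pos
  have hcoeff := abs_tangentCoeff_le hP0 hP1 (c := c)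
  have havg : |(∑ k ∈ U, tangentCoeff U K P k c) / #U| ≤ 2 * #U := by
    rw [abs_div, abs_of_pos hn, div_le_iff₀ hn]
    calc |∑ k ∈ U, tangentCoeff U K P k c| ≤ ∑ _k ∈ U, 2 * (#U : ℝ) :=
          (abs_sum_le_sum_abs _ _).trans (sum_le_sum fun k _ => hcoeff k)
      _ = 2 * #U * #U := by rw [sum_const, nsmul_eq_mul, mul_comm]
  have hden : (0 : ℝ) < 4 * #U ^ 2 := by positivity
  rw [signStrategy, add_sub_cancel_left, abs_div, abs_of_pos hden, div_le_iff₀ hden]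
  calc _ ≤ 2 * (#U : ℝ) + 2 * #U := (abs_sub _ _).trans (add_le_add (hcoeff j) havg)
    _ = 1 / #U * (4 * #U ^ 2) := by field_simp; ring

lemma signStrategy_nonneg (hU : U.Nonempty) (hP0 : ∀ i ∈ U, ∀ c ∈ K, 0 ≤ P i c)
    (hP1 : ∀ i ∈ U, ∑ c ∈ K, P i c = 1) (c : κ) (j : ι) : 0 ≤ signStrategy U K P c j := by
  linarith [(abs_sub_le_iff.mp (abs_signStrategy_sub_le hU hP0 hP1 c j)).2]

lemma signStrategy_le (hU : U.Nonempty) (hP0 : ∀ i ∈ U, ∀ c ∈ K, 0 ≤ P i c)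
    (hP1 : ∀ i ∈ U, ∑ c ∈ K, P i c = 1) (c : κ) (j : ι) : signStrategy U K P c j ≤ 2 / #U := by
  have h := (abs_sub_le_iff.mp (abs_signStrategy_sub_le hU hP0 hP1 c j)).1
  rw [sub_le_iff_le_add, ← add_div, one_add_one_eq_two] at h
  exact h

lemma sum_signStrategy (hU : U.Nonempty) (c : κ) : ∑ j ∈ U, signStrategy U K P c j = 1 := by
  have hn : (#U : ℝ) ≠ 0 := by exact_mod_cast hU.card_pos.ne'
  simp only [signStrategy, sum_add_distrib, ← sum_div, sum_sub_distrib, sum_const, nsmul_eq_mul]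
  field_simp
  ring

variable (U K P) in
def voteDist (i j : ι) : ℝ := ∑ c ∈ K, P i c * signStrategy U K P c j

lemma dist_div_le_voteDist_sub (hP1 : ∀ i ∈ U, ∑ c ∈ K, P i c = 1) {i j : ι} (hi : i ∈ U)
    (hj : j ∈ U) :
    (∑ c ∈ K, |P i c - P j c|) / (4 * #U ^ 2) ≤ voteDist U K P i i - voteDist U K P i j := by
  have hdiff : voteDist U K P i i - voteDist U K P i j =
      (∑ c ∈ K, P i c * tangentCoeff U K P i c - ∑ c ∈ K, P i c * tangentCoeff U K P j c) /
        (4 * #U ^ 2) := by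
    simp only [voteDist, ← sum_sub_distrib, sum_div]
    refine sum_congr rfl fun c _ => ?_
    simp only [signStrategy]
    ring
  rw [hdiff]
  gcongr
  linarith [sum_mul_tangentCoeff_add_dist_le hP1 hi hj]

lemma voteDist_nonneg (hU : U.Nonempty) (hP0 : ∀ i ∈ U, ∀ c ∈ K, 0 ≤ P i c)
    (hP1 : ∀ i ∈ U, ∑ c ∈ K, P i c = 1) {i : ι} (hi : i ∈ U) (j : ι) :
    0 ≤ voteDist U K P i j :=
  sum_nonneg fun c hc => mul_nonneg (hP0 i hi c hc) (signStrategy_nonneg hU hP0 hP1 c j)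

lemma voteDist_le (hU : U.Nonempty) (hP0 : ∀ i ∈ U, ∀ c ∈ K, 0 ≤ P i c)
    (hP1 : ∀ i ∈ U, ∑ c ∈ K, P i c = 1) {i : ι} (hi : i ∈ U) (j : ι) :
    voteDist U K P i j ≤ 2 / #U :=
  calc voteDist U K P i j ≤ ∑ c ∈ K, P i c * (2 / #U) :=
        sum_le_sum fun c hc => mul_le_mul_of_nonneg_left (signStrategy_le hU hP0 hP1 c j)
          (hP0 i hi c hc)
    _ = 2 / #U := by rw [← sum_mul, hP1 i hi, one_mul]

lemma sum_voteDist (hU : U.Nonempty) (hP1 : ∀ i ∈ U, ∑ c ∈ K, P i c = 1) {i : ι} (hi : i ∈ U) :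
    ∑ j ∈ U, voteDist U K P i j = 1 := by
  simp only [voteDist]
  rw [sum_comm]
  simp only [← mul_sum, sum_signStrategy hU, mul_one, hP1 i hi]

end strategy

lemma card_mul_exp_neg_le {n η x : ℝ} (hn : 0 < n) (hη : 0 < η) (hx : log (n / η) ≤ x) :
    n * exp (-x) ≤ η := by
  calc n * exp (-x) ≤ n * exp (-log (n / η)) := by gcongr
    _ = η := by rw [exp_neg, exp_log (by positivity), inv_div]; field_simp

lemma le_natCeil_mul_div_mul {n ε K L : ℝ} (hn : 0 < n) (hε : ε ≠ 0) (hK : 128 ≤ K)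
    (hL : 0 ≤ L) : L ≤ ⌈K * n ^ 3 / ε ^ 2 * L⌉₊ * (ε ^ 2 / (128 * n ^ 3)) :=
  calc L ≤ K / 128 * L := le_mul_of_one_le_left hL (by rwa [one_le_div₀ (by norm_num)])
    _ = K * n ^ 3 / ε ^ 2 * L * (ε ^ 2 / (128 * n ^ 3)) := by field_simp
    _ ≤ ⌈K * n ^ 3 / ε ^ 2 * L⌉₊ * (ε ^ 2 / (128 * n ^ 3)) := by gcongr; exact Nat.le_ceil _

end

open Classical in
theorem stmt_5_general
    (n C : ℕ) (hn : 2 ≤ n) (hC : 2 ≤ C)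
    (P : ℕ → ℕ → ℝ)
    (hPnn : ∀ i ∈ Finset.Icc 1 n, ∀ c ∈ Finset.Icc 1 C, 0 ≤ P i c)
    (hPsum : ∀ i ∈ Finset.Icc 1 n, ∑ c ∈ Finset.Icc 1 C, P i c = 1)
    (ε : ℝ) (hεpos : 0 < ε)
    (hε : IsLeast {x : ℝ | ∃ i ∈ Finset.Icc 1 n, ∃ j ∈ Finset.Icc 1 n, i ≠ j ∧
            x = ∑ c ∈ Finset.Icc 1 C, |P i c - P j c|} ε)
    (T : ℕ) (hT : T = ⌈Real.log C / Real.log 3⌉₊ + 1)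
    (η : ℝ) (hη0 : 0 < η) (hη1 : η < 1) :
    ∃ (m : ℕ) (σ : ℕ → ℕ → ℝ),
      (m : ℤ) ≤ ⌈7 * 10 ^ 12 * (C : ℝ) ^ 2 * (T : ℝ) ^ 2 * (n : ℝ) ^ 3 / ε ^ 2 *
          Real.log (n / η)⌉ ∧
      (∀ c ∈ Finset.Icc 1 C, (∀ j ∈ Finset.Icc 1 n, 0 ≤ σ c j) ∧
          ∑ j ∈ Finset.Icc 1 n, σ c j = 1) ∧
      ∀ i ∈ Finset.Icc 1 n,
        1 - η ≤ ∑ v ∈ Fintype.piFinset (fun _ : Fin m => Finset.Icc 1 n),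
          (if ∀ j ∈ Finset.Icc 1 n, j ≠ i →
                (Finset.univ.filter (fun t : Fin m => v t = j)).card <
                (Finset.univ.filter (fun t : Fin m => v t = i)).card
           then ∏ t : Fin m, (∑ c ∈ Finset.Icc 1 C, P i c * σ c (v t)) else 0) := by
  have hU : (Icc 1 n).Nonempty := nonempty_Icc.mpr (by omega)
  have hcard : (#(Icc 1 n) : ℝ) = n := by simp
  have hn2 : (2 : ℝ) ≤ n := by exact_mod_cast hn
  have hL : 0 < Real.log (n / η) := Real.log_pos (by rw [lt_div_iff₀ hη0]; linarith)
  set m := ⌈7 * 10 ^ 12 * (C : ℝ) ^ 2 * (T : ℝ) ^ 2 * (n : ℝ) ^ 3 / ε ^ 2 * Real.log (n / η)⌉₊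
  refine ⟨m, signStrategy (Icc 1 n) (Icc 1 C) P, (Int.natCast_ceil_eq_ceil (by positivity)).le,
    fun c _ => ⟨fun j _ => signStrategy_nonneg hU hPnn hPsum c j, sum_signStrategy hU c⟩,
    fun i hi => ?_⟩
  have hgap : ∀ j ∈ Icc 1 n, j ≠ i →
      ε / (4 * #(Icc 1 n) ^ 2) ≤ voteDist (Icc 1 n) (Icc 1 C) P i i - voteDist _ _ P i j :=
    fun j hj hji => le_trans (by gcongr; exact hε.2 ⟨i, hi, j, hj, hji.symm, rfl⟩)
      (dist_div_le_voteDist_sub hPsum hi hj)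
  refine le_trans ?_ (one_sub_card_mul_exp_le_iidProb_wins
    (fun j _ => voteDist_nonneg hU hPnn hPsum hi j)
    (sum_voteDist hU hPsum hi) hi (by positivity) (voteDist_le hU hPnn hPsum hi i) (by positivity)
    hgap m)
  have hCT : (128 : ℝ) ≤ 7 * 10 ^ 12 * C ^ 2 * T ^ 2 := by
    have hC1 : (1 : ℝ) ≤ C := by exact_mod_cast hC.trans' one_le_two
    have hT1 : (1 : ℝ) ≤ T := by exact_mod_cast (hT ▸ Nat.le_add_left 1 _ : 1 ≤ T)
    nlinarith [one_le_pow₀ hC1 (n := 2), one_le_pow₀ hT1 (n := 2)]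
  have hrate : (ε / (4 * n ^ 2)) ^ 2 / (4 * (2 / n)) = ε ^ 2 / (128 * n ^ 3) := by
    field_simp; ring
  rw [hcard, sub_le_sub_iff_left, hrate]
  exact card_mul_exp_neg_le (by positivity) hη0 (le_natCeil_mul_div_mul (by positivity)
    hεpos.ne' hCT hL.le)

open Classical in
theorem stmt_5
    (n C : ℕ) (hn : 2 ≤ n) (hC : 2 ≤ C)
    (P : ℕ → ℕ → ℝ)
    (hPnn : ∀ i ∈ Finset.Icc 1 n, ∀ c ∈ Finset.Icc 1 C, 0 ≤ P i c)
    (hPsum : ∀ i ∈ Finset.Icc 1 n, ∑ c ∈ Finset.Icc 1 C, P i c = 1)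
    (hdistinct : ∀ i ∈ Finset.Icc 1 n, ∀ j ∈ Finset.Icc 1 n, i ≠ j →
        ∃ c ∈ Finset.Icc 1 C, P i c ≠ P j c)
    (ε : ℝ) (hεpos : 0 < ε)
    (hε : IsLeast {x : ℝ | ∃ i ∈ Finset.Icc 1 n, ∃ j ∈ Finset.Icc 1 n, i ≠ j ∧
            x = ∑ c ∈ Finset.Icc 1 C, |P i c - P j c|} ε)
    (T : ℕ) (hT : T = ⌈Real.log C / Real.log 3⌉₊ + 1)
    (η : ℝ) (hη0 : 0 < η) (hη1 : η < 1) :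
    ∃ (m : ℕ) (σ : ℕ → ℕ → ℝ),
      (m : ℤ) ≤ ⌈7 * 10 ^ 12 * (C : ℝ) ^ 2 * (T : ℝ) ^ 2 * (n : ℝ) ^ 3 / ε ^ 2 *
          Real.log (n / η)⌉ ∧
      (∀ c ∈ Finset.Icc 1 C, (∀ j ∈ Finset.Icc 1 n, 0 ≤ σ c j) ∧
          ∑ j ∈ Finset.Icc 1 n, σ c j = 1) ∧
      ∀ i ∈ Finset.Icc 1 n,
        1 - η ≤ ∑ v ∈ Fintype.piFinset (fun _ : Fin m => Finset.Icc 1 n),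
          (if ∀ j ∈ Finset.Icc 1 n, j ≠ i →
                (Finset.univ.filter (fun t : Fin m => v t = j)).card <
                (Finset.univ.filter (fun t : Fin m => v t = i)).card
           then ∏ t : Fin m, (∑ c ∈ Finset.Icc 1 C, P i c * σ c (v t)) else 0) :=
  stmt_5_general n C hn hC P hPnn hPsum ε hεpos hε T hT η hη0 hη1
end

section
/- Let η ∈ (0,1) and set m = ⌈150·ε^{−2}·ln(2/η)⌉. For every urn i ∈ {1,…,n}: let X be binomially distributed with parameters m and p_i (the number of voters drawing a blue ball), and give urn j the total score X·B_j + (m−X)·R_j. Then with probability at least 1 − η, the total score of urn i strictly exceeds the total score of every other urn j ≠ i. -/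
open Finset

lemma binom_sum (m : ℕ) (p q : ℝ) :
    ∑ x ∈ Finset.range (m+1), (m.choose x : ℝ) * p ^ x * q ^ (m-x) = (p+q)^m := by
  rw [add_pow]
  exact Finset.sum_congr rfl (fun x _ => by ring)

lemma exp_quad {L : ℝ} (h0 : 0 ≤ L) (h1 : L ≤ 1) :
    Real.exp L ≤ 1 + L + L^2 * (3/4) := by
  have h := Real.exp_bound' h0 h1 (n := 2) (by norm_num)
  simp only [Finset.sum_range_succ, Finset.sum_range_zero] at h
  norm_num at h
  linarith

lemma chernoff_upper (m : ℕ) (p t : ℝ) (hp0 : 0 ≤ p) (hp1 : p ≤ 1) (ht : 0 < t) (ht3 : t ≤ 3) :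
    ∑ x ∈ Finset.range (m+1), (m.choose x : ℝ) * p ^ x * (1-p) ^ (m-x) *
      (if (m:ℝ)*p + (m:ℝ)*t ≤ x then 1 else 0) ≤ Real.exp (-(m:ℝ) * t^2 / 6) := by
  classical
  set L : ℝ := t/3 with hLdef
  have hL0 : 0 < L := by positivity
  have hL1 : L ≤ 1 := by rw [hLdef]; linarith
  have hq0 : (0:ℝ) ≤ 1 - p := by linarith
  set c : ℝ := Real.exp (-(L * ((m:ℝ)*p + (m:ℝ)*t))) with hcdef
  have step1 : ∀ x ∈ Finset.range (m+1),
      (m.choose x : ℝ) * p ^ x * (1-p) ^ (m-x) * (if (m:ℝ)*p + (m:ℝ)*t ≤ x then 1 else 0)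
      ≤ (m.choose x : ℝ) * (p * Real.exp L) ^ x * (1-p) ^ (m-x) * c := by
    intro x _
    have hw : (0:ℝ) ≤ (m.choose x : ℝ) * p ^ x * (1-p) ^ (m-x) := by positivity
    have hrw : (m.choose x : ℝ) * (p * Real.exp L) ^ x * (1-p) ^ (m-x) * c
        = ((m.choose x : ℝ) * p ^ x * (1-p) ^ (m-x)) * (Real.exp (L * x) * c) := by
      rw [mul_pow, mul_comm L (x:ℝ), Real.exp_nat_mul]
      ring
    rw [hrw]
    split_ifs with h
    · have hkey : (1:ℝ) ≤ Real.exp (L * x) * c := by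
        rw [hcdef, ← Real.exp_add]
        have h0 : (0:ℝ) ≤ L * x + -(L * ((m:ℝ)*p + (m:ℝ)*t)) := by nlinarith
        calc (1:ℝ) = Real.exp 0 := Real.exp_zero.symm
        _ ≤ _ := Real.exp_le_exp.2 h0
      nlinarith
    · simp only [mul_zero]
      positivity
  have step2 : ∑ x ∈ Finset.range (m+1),
      (m.choose x : ℝ) * (p * Real.exp L) ^ x * (1-p) ^ (m-x) * c
      = c * (p * Real.exp L + (1-p))^m := by
    rw [← Finset.sum_mul, binom_sum, mul_comm]
  have step3 : (p * Real.exp L + (1-p))^m ≤ Real.exp ((m:ℝ) * (p * (Real.exp L - 1))) := by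
    have hb : p * Real.exp L + (1-p) ≤ Real.exp (p * (Real.exp L - 1)) := by
      have := Real.add_one_le_exp (p * (Real.exp L - 1))
      linarith
    have hnn : (0:ℝ) ≤ p * Real.exp L + (1-p) := by
      have := Real.exp_pos L
      nlinarith
    calc (p * Real.exp L + (1-p))^m ≤ (Real.exp (p * (Real.exp L - 1)))^m :=
          pow_le_pow_left₀ hnn hb m
    _ = Real.exp ((m:ℝ) * (p * (Real.exp L - 1))) := (Real.exp_nat_mul _ m).symm
  have step4 : c * Real.exp ((m:ℝ) * (p * (Real.exp L - 1))) ≤ Real.exp (-(m:ℝ) * t^2 / 6) := by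
    rw [hcdef, ← Real.exp_add]
    apply Real.exp_le_exp.2
    have hE : Real.exp L ≤ 1 + L + L^2 * (3/4) := exp_quad hL0.le hL1
    have hm0 : (0:ℝ) ≤ (m:ℝ) := Nat.cast_nonneg m
    have hL2 : (0:ℝ) ≤ L^2 := sq_nonneg L
    -- exponent: -(L*(mp+mt)) + m * (p*(E-1)) ≤ -m t^2/6
    have h1 : p * (Real.exp L - 1) ≤ p * L + L^2 * (3/4) := by nlinarith
    have h2 : (m:ℝ) * (p * (Real.exp L - 1)) ≤ (m:ℝ) * (p * L + L^2 * (3/4)) :=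
      mul_le_mul_of_nonneg_left h1 hm0
    have h3 : (m:ℝ) * (p * L + L^2 * (3/4)) - L * ((m:ℝ)*p + (m:ℝ)*t) ≤ -(m:ℝ) * t^2 / 6 := by
      have : (m:ℝ) * (p * L + L^2 * (3/4)) - L * ((m:ℝ)*p + (m:ℝ)*t)
          = (m:ℝ) * (L^2 * (3/4) - L * t) := by ring
      rw [this, hLdef]
      have key : (t/3)^2 * (3/4) - (t/3) * t ≤ -(t^2/6) := by nlinarith
      calc (m:ℝ) * ((t/3)^2 * (3/4) - (t/3) * t) ≤ (m:ℝ) * (-(t^2/6)) :=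
            mul_le_mul_of_nonneg_left key hm0
      _ = -(m:ℝ) * t^2 / 6 := by ring
    linarith
  calc _ ≤ _ := Finset.sum_le_sum step1
  _ = c * (p * Real.exp L + (1-p))^m := step2
  _ ≤ c * Real.exp ((m:ℝ) * (p * (Real.exp L - 1))) := by
      apply mul_le_mul_of_nonneg_left step3 (Real.exp_pos _).le
  _ ≤ _ := step4

lemma chernoff_lower (m : ℕ) (p t : ℝ) (hp0 : 0 ≤ p) (hp1 : p ≤ 1) (ht : 0 < t) (ht3 : t ≤ 3) :
    ∑ x ∈ Finset.range (m+1), (m.choose x : ℝ) * p ^ x * (1-p) ^ (m-x) *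
      (if (x:ℝ) ≤ (m:ℝ)*p - (m:ℝ)*t then 1 else 0) ≤ Real.exp (-(m:ℝ) * t^2 / 6) := by
  classical
  have h := chernoff_upper m (1-p) t (by linarith) (by linarith) ht ht3
  simp only [sub_sub_cancel] at h
  refine le_trans (le_of_eq ?_) h
  rw [← Finset.sum_range_reflect]
  refine Finset.sum_congr rfl (fun x hx => ?_)
  have hxm : x ≤ m := by
    have := Finset.mem_range.mp hx; omega
  have hre : m + 1 - 1 - x = m - x := by omega
  rw [hre, Nat.choose_symm hxm, Nat.sub_sub_self hxm, Nat.cast_sub hxm]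
  have hiff : ((m:ℝ) - (x:ℝ) ≤ (m:ℝ)*p - (m:ℝ)*t) ↔ ((m:ℝ)*(1-p) + (m:ℝ)*t ≤ (x:ℝ)) := by
    constructor <;> intro <;> nlinarith
  rw [if_congr hiff rfl rfl]
  ring


/- STATEMENT 6: Cumulative voting: with m = ⌈150·ε⁻²·ln(2/η)⌉ voters, X ~ Binomial(m, p_i)
blue draws, and total score X·B_j + (m−X)·R_j for urn j, with probability at least 1 − η
the score of the correct urn i strictly exceeds the score of every other urn. -/
set_option maxHeartbeats 1000000 in
open Classical in
theorem stmt_6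
    (n : ℕ) (hn : 2 ≤ n)
    (p : ℕ → ℝ)
    (hp0 : 0 ≤ p 1) (hp1 : p n ≤ 1)
    (hmono : ∀ i ∈ Finset.Ico 1 n, p i < p (i + 1))
    (ε : ℝ)
    (hε : IsLeast {x : ℝ | ∃ i, 1 ≤ i ∧ i < n ∧ x = p (i + 1) - p i} ε)
    (b r : ℕ → ℝ)
    (hb : ∀ k, b k = ∑ ℓ ∈ Finset.Ico 1 k, (2 - (p (ℓ + 1) + p ℓ)) / (p (ℓ + 1) - p ℓ))
    (hr : ∀ k, r k = ∑ ℓ ∈ Finset.Ico k n, (p (ℓ + 1) + p ℓ) / (p (ℓ + 1) - p ℓ))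
    (R B M : ℝ)
    (hR : R = ∑ k ∈ Finset.Icc 1 n, r k)
    (hB : B = ∑ k ∈ Finset.Icc 1 n, b k)
    (hM : M = max R B)
    (Rv Bv : ℕ → ℝ)
    (hRv : ∀ j, Rv j = (r j + (M - R) / n) / M)
    (hBv : ∀ j, Bv j = (b j + (M - B) / n) / M)
    (η : ℝ) (hη0 : 0 < η) (hη1 : η < 1)
    (m : ℕ) (hm : (m : ℤ) = ⌈150 * ε⁻¹ ^ 2 * Real.log (2 / η)⌉) :
    ∀ i ∈ Finset.Icc 1 n,
      1 - η ≤ ∑ x ∈ Finset.range (m + 1),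
        (m.choose x : ℝ) * p i ^ x * (1 - p i) ^ (m - x) *
          (if ∀ j ∈ Finset.Icc 1 n, j ≠ i →
              (x : ℝ) * Bv j + ((m : ℝ) - x) * Rv j <
              (x : ℝ) * Bv i + ((m : ℝ) - x) * Rv i
           then 1 else 0) := by
  intro i hi
  obtain ⟨hi1, hin⟩ := Finset.mem_Icc.mp hi
  -- monotonicity of p on [1, n]
  have pmono : ∀ a c : ℕ, 1 ≤ a → a ≤ c → c ≤ n → p a ≤ p c := by
    intro a c h1 hac
    induction c, hac using Nat.le_induction with
    | base => intro _; exact le_refl _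
    | succ c hac ih =>
      intro hcn
      have hc1 : 1 ≤ c := le_trans h1 hac
      have hstep := hmono c (Finset.mem_Ico.mpr ⟨hc1, by omega⟩)
      exact le_trans (ih (by omega)) hstep.le
  -- ε facts
  obtain ⟨i₀, hi₀1, hi₀n, hi₀e⟩ := hε.1
  have hεle : ∀ ℓ, 1 ≤ ℓ → ℓ < n → ε ≤ p (ℓ + 1) - p ℓ := fun ℓ h1 h2 => hε.2 ⟨ℓ, h1, h2, rfl⟩
  have hε0 : 0 < ε := by
    have := hmono i₀ (Finset.mem_Ico.mpr ⟨hi₀1, hi₀n⟩)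
    rw [hi₀e]; linarith
  have hε1 : ε ≤ 1 := by
    have h1 : p 1 ≤ p i₀ := pmono 1 i₀ le_rfl hi₀1 (by omega)
    have h2 : p (i₀ + 1) ≤ p n := pmono (i₀ + 1) n (by omega) (by omega) le_rfl
    rw [hi₀e]; linarith
  have hpi0 : 0 ≤ p i := le_trans hp0 (pmono 1 i le_rfl hi1 hin)
  have hpi1 : p i ≤ 1 := le_trans (pmono i n hi1 hin le_rfl) hp1
  have hpnn : ∀ ℓ, 1 ≤ ℓ → ℓ ≤ n → 0 ≤ p ℓ := fun ℓ h1 h2 => le_trans hp0 (pmono 1 ℓ le_rfl h1 h2)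
  -- M > 0
  have hr_nonneg : ∀ k, 1 ≤ k → 0 ≤ r k := by
    intro k hk
    rw [hr]
    apply Finset.sum_nonneg
    intro ℓ hℓ
    obtain ⟨hℓ1, hℓ2⟩ := Finset.mem_Ico.mp hℓ
    have hd : 0 < p (ℓ + 1) - p ℓ := by
      have := hmono ℓ (Finset.mem_Ico.mpr ⟨le_trans hk hℓ1, hℓ2⟩); linarith
    have h0 : 0 ≤ p ℓ := hpnn ℓ (le_trans hk hℓ1) (by omega)
    have h0' : 0 ≤ p (ℓ + 1) := hpnn (ℓ + 1) (by omega) (by omega)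
    positivity
  have hr1 : 0 < r 1 := by
    rw [hr]
    apply Finset.sum_pos
    · intro ℓ hℓ
      obtain ⟨hℓ1, hℓ2⟩ := Finset.mem_Ico.mp hℓ
      have hd : 0 < p (ℓ + 1) - p ℓ := by
        have := hmono ℓ (Finset.mem_Ico.mpr ⟨hℓ1, hℓ2⟩); linarith
      have h0 : 0 ≤ p ℓ := hpnn ℓ hℓ1 (by omega)
      have h0' : 0 < p (ℓ + 1) := by linarith
      positivity
    · exact ⟨1, Finset.mem_Ico.mpr ⟨le_rfl, by omega⟩⟩
  have hR0 : 0 < R := by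
    rw [hR]
    apply Finset.sum_pos'
    · intro k hk
      exact hr_nonneg k (Finset.mem_Icc.mp hk).1
    · exact ⟨1, Finset.mem_Icc.mpr ⟨le_rfl, by omega⟩, hr1⟩
  have hM0 : 0 < M := lt_of_lt_of_le hR0 (hM ▸ le_max_left R B)
  -- deterministic part
  have key : ∀ x : ℕ, x ≤ m →
      ((m:ℝ) * p i - (m:ℝ) * (ε/2) < (x:ℝ)) → ((x:ℝ) < (m:ℝ) * p i + (m:ℝ) * (ε/2)) →
      ∀ j ∈ Finset.Icc 1 n, j ≠ i →
        (x : ℝ) * Bv j + ((m : ℝ) - x) * Rv j < (x : ℝ) * Bv i + ((m : ℝ) - x) * Rv i := by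
    intro x hxm hxl hxu j hj hji
    obtain ⟨hj1, hjn⟩ := Finset.mem_Icc.mp hj
    have hDgoal : 0 < (x:ℝ) * (b i - b j) + ((m:ℝ) - x) * (r i - r j) := by
      rcases lt_or_gt_of_ne hji with hlt | hgt
      · -- j < i
        have hbd : b i - b j = ∑ ℓ ∈ Finset.Ico j i,
            (2 - (p (ℓ + 1) + p ℓ)) / (p (ℓ + 1) - p ℓ) := by
          have := Finset.sum_Ico_consecutive
            (fun ℓ => (2 - (p (ℓ + 1) + p ℓ)) / (p (ℓ + 1) - p ℓ)) hj1 hlt.le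
          rw [hb, hb]; linarith
        have hrd : r i - r j = -∑ ℓ ∈ Finset.Ico j i,
            (p (ℓ + 1) + p ℓ) / (p (ℓ + 1) - p ℓ) := by
          have := Finset.sum_Ico_consecutive
            (fun ℓ => (p (ℓ + 1) + p ℓ) / (p (ℓ + 1) - p ℓ)) hlt.le hin
          rw [hr, hr]; linarith
        have heq : (x:ℝ) * (b i - b j) + ((m:ℝ) - x) * (r i - r j)
            = ∑ ℓ ∈ Finset.Ico j i,
                (2 * (x:ℝ) - (m:ℝ) * (p (ℓ + 1) + p ℓ)) / (p (ℓ + 1) - p ℓ) := by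
          rw [hbd, hrd, Finset.mul_sum, ← Finset.sum_neg_distrib, Finset.mul_sum,
            ← Finset.sum_add_distrib]
          refine Finset.sum_congr rfl (fun ℓ hℓ => ?_)
          obtain ⟨hℓ1, hℓ2⟩ := Finset.mem_Ico.mp hℓ
          have hd : 0 < p (ℓ + 1) - p ℓ := by
            have := hmono ℓ (Finset.mem_Ico.mpr ⟨le_trans hj1 hℓ1, by omega⟩); linarith
          field_simp
          ring
        rw [heq]
        apply Finset.sum_pos
        · intro ℓ hℓ
          obtain ⟨hℓ1, hℓ2⟩ := Finset.mem_Ico.mp hℓ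
          have hℓ1' : 1 ≤ ℓ := le_trans hj1 hℓ1
          have hℓn : ℓ < n := by omega
          have hd : 0 < p (ℓ + 1) - p ℓ := by
            have := hmono ℓ (Finset.mem_Ico.mpr ⟨hℓ1', hℓn⟩); linarith
          have hde : ε ≤ p (ℓ + 1) - p ℓ := hεle ℓ hℓ1' hℓn
          have hpe : p (ℓ + 1) ≤ p i := pmono (ℓ + 1) i (by omega) (by omega) hin
          have hnum : 0 < 2 * (x:ℝ) - (m:ℝ) * (p (ℓ + 1) + p ℓ) := by
            have hm0 : (0:ℝ) ≤ (m:ℝ) := Nat.cast_nonneg m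
            have hs : p (ℓ + 1) + p ℓ ≤ 2 * p i - ε := by linarith
            nlinarith [mul_le_mul_of_nonneg_left hs hm0]
          exact div_pos hnum hd
        · exact ⟨j, Finset.mem_Ico.mpr ⟨le_rfl, hlt⟩⟩
      · -- i < j
        have hbd : b i - b j = -∑ ℓ ∈ Finset.Ico i j,
            (2 - (p (ℓ + 1) + p ℓ)) / (p (ℓ + 1) - p ℓ) := by
          have := Finset.sum_Ico_consecutive
            (fun ℓ => (2 - (p (ℓ + 1) + p ℓ)) / (p (ℓ + 1) - p ℓ)) hi1 hgt.le
          rw [hb, hb]; linarith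
        have hrd : r i - r j = ∑ ℓ ∈ Finset.Ico i j,
            (p (ℓ + 1) + p ℓ) / (p (ℓ + 1) - p ℓ) := by
          have := Finset.sum_Ico_consecutive
            (fun ℓ => (p (ℓ + 1) + p ℓ) / (p (ℓ + 1) - p ℓ)) hgt.le hjn
          rw [hr, hr]; linarith
        have heq : (x:ℝ) * (b i - b j) + ((m:ℝ) - x) * (r i - r j)
            = ∑ ℓ ∈ Finset.Ico i j,
                ((m:ℝ) * (p (ℓ + 1) + p ℓ) - 2 * (x:ℝ)) / (p (ℓ + 1) - p ℓ) := by
          rw [hbd, hrd, ← Finset.sum_neg_distrib, Finset.mul_sum, Finset.mul_sum,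
            ← Finset.sum_add_distrib]
          refine Finset.sum_congr rfl (fun ℓ hℓ => ?_)
          obtain ⟨hℓ1, hℓ2⟩ := Finset.mem_Ico.mp hℓ
          have hd : 0 < p (ℓ + 1) - p ℓ := by
            have := hmono ℓ (Finset.mem_Ico.mpr ⟨le_trans hi1 hℓ1, by omega⟩); linarith
          field_simp
          ring
        rw [heq]
        apply Finset.sum_pos
        · intro ℓ hℓ
          obtain ⟨hℓ1, hℓ2⟩ := Finset.mem_Ico.mp hℓ
          have hℓ1' : 1 ≤ ℓ := le_trans hi1 hℓ1
          have hℓn : ℓ < n := by omega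
          have hd : 0 < p (ℓ + 1) - p ℓ := by
            have := hmono ℓ (Finset.mem_Ico.mpr ⟨hℓ1', hℓn⟩); linarith
          have hde : ε ≤ p (ℓ + 1) - p ℓ := hεle ℓ hℓ1' hℓn
          have hpe : p i ≤ p ℓ := pmono i ℓ hi1 hℓ1 (by omega)
          have hnum : 0 < (m:ℝ) * (p (ℓ + 1) + p ℓ) - 2 * (x:ℝ) := by
            have hm0 : (0:ℝ) ≤ (m:ℝ) := Nat.cast_nonneg m
            have hs : 2 * p i + ε ≤ p (ℓ + 1) + p ℓ := by linarith
            nlinarith [mul_le_mul_of_nonneg_left hs hm0]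
          exact div_pos hnum hd
        · exact ⟨i, Finset.mem_Ico.mpr ⟨le_rfl, hgt⟩⟩
    have hexp : (x:ℝ) * Bv i + ((m:ℝ) - x) * Rv i - ((x:ℝ) * Bv j + ((m:ℝ) - x) * Rv j)
        = ((x:ℝ) * (b i - b j) + ((m:ℝ) - x) * (r i - r j)) / M := by
      rw [hRv i, hRv j, hBv i, hBv j]
      field_simp
      ring
    have := div_pos hDgoal hM0
    linarith [hexp ▸ this]
  -- probabilistic part
  set t : ℝ := ε / 2 with htdef
  have ht0 : 0 < t := by positivity
  have ht3 : t ≤ 3 := by rw [htdef]; linarith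
  have hup := chernoff_upper m (p i) t hpi0 hpi1 ht0 ht3
  have hlo := chernoff_lower m (p i) t hpi0 hpi1 ht0 ht3
  set w : ℕ → ℝ := fun x => (m.choose x : ℝ) * p i ^ x * (1 - p i) ^ (m - x) with hwdef
  have hw0 : ∀ x, 0 ≤ w x := by
    intro x
    have : 0 ≤ 1 - p i := by linarith
    positivity
  have hsum1 : ∑ x ∈ Finset.range (m + 1), w x = 1 := by
    rw [hwdef]
    simp only
    rw [binom_sum]
    norm_num
  set cond : ℕ → Prop := fun x => ∀ j ∈ Finset.Icc 1 n, j ≠ i →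
      (x : ℝ) * Bv j + ((m : ℝ) - x) * Rv j < (x : ℝ) * Bv i + ((m : ℝ) - x) * Rv i
    with hconddef
  have hpoint : ∀ x ∈ Finset.range (m + 1),
      w x * (1 - (if cond x then 1 else 0)) ≤
        w x * (if (m:ℝ) * p i + (m:ℝ) * t ≤ (x:ℝ) then 1 else 0) +
        w x * (if (x:ℝ) ≤ (m:ℝ) * p i - (m:ℝ) * t then 1 else 0) := by
    intro x hx
    have hxm : x ≤ m := by have := Finset.mem_range.mp hx; omega
    by_cases hc : cond x
    · rw [if_pos hc]
      simp only [sub_self, mul_zero]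
      have h1 : (0:ℝ) ≤ w x * (if (m:ℝ) * p i + (m:ℝ) * t ≤ (x:ℝ) then 1 else 0) := by
        split_ifs <;> simp [hw0 x]
      have h2 : (0:ℝ) ≤ w x * (if (x:ℝ) ≤ (m:ℝ) * p i - (m:ℝ) * t then 1 else 0) := by
        split_ifs <;> simp [hw0 x]
      linarith
    · rw [if_neg hc]
      -- x must be bad
      have hbad : ((m:ℝ) * p i + (m:ℝ) * t ≤ (x:ℝ)) ∨ ((x:ℝ) ≤ (m:ℝ) * p i - (m:ℝ) * t) := by
        by_contra hcon
        push_neg at hcon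
        exact hc (key x hxm (by linarith [hcon.2]) (by linarith [hcon.1]))
      rcases hbad with hb1 | hb2
      · rw [if_pos hb1]
        have h2 : (0:ℝ) ≤ w x * (if (x:ℝ) ≤ (m:ℝ) * p i - (m:ℝ) * t then 1 else 0) := by
          split_ifs <;> simp [hw0 x]
        linarith [hw0 x]
      · rw [if_pos hb2]
        have h1 : (0:ℝ) ≤ w x * (if (m:ℝ) * p i + (m:ℝ) * t ≤ (x:ℝ) then 1 else 0) := by
          split_ifs <;> simp [hw0 x]
        linarith [hw0 x]
  have hbound : ∑ x ∈ Finset.range (m + 1), w x * (1 - (if cond x then 1 else 0)) ≤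
      2 * Real.exp (-(m:ℝ) * t^2 / 6) := by
    calc ∑ x ∈ Finset.range (m + 1), w x * (1 - (if cond x then 1 else 0))
        ≤ ∑ x ∈ Finset.range (m + 1),
            (w x * (if (m:ℝ) * p i + (m:ℝ) * t ≤ (x:ℝ) then 1 else 0) +
             w x * (if (x:ℝ) ≤ (m:ℝ) * p i - (m:ℝ) * t then 1 else 0)) :=
          Finset.sum_le_sum hpoint
      _ = (∑ x ∈ Finset.range (m + 1),
            w x * (if (m:ℝ) * p i + (m:ℝ) * t ≤ (x:ℝ) then 1 else 0)) +
          (∑ x ∈ Finset.range (m + 1),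
            w x * (if (x:ℝ) ≤ (m:ℝ) * p i - (m:ℝ) * t then 1 else 0)) :=
          Finset.sum_add_distrib
      _ ≤ Real.exp (-(m:ℝ) * t^2 / 6) + Real.exp (-(m:ℝ) * t^2 / 6) := add_le_add hup hlo
      _ = 2 * Real.exp (-(m:ℝ) * t^2 / 6) := by ring
  -- numeric bound
  have hlog0 : 0 < Real.log (2 / η) := by
    apply Real.log_pos
    rw [lt_div_iff₀ hη0]
    linarith
  have hm150 : 150 * ε⁻¹ ^ 2 * Real.log (2 / η) ≤ (m:ℝ) := by
    have h1 : (150 * ε⁻¹ ^ 2 * Real.log (2 / η) : ℝ) ≤ ((⌈150 * ε⁻¹ ^ 2 * Real.log (2 / η)⌉ : ℤ) : ℝ) :=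
      Int.le_ceil _
    rw [← hm] at h1
    exact_mod_cast h1
  have hnum : 2 * Real.exp (-(m:ℝ) * t^2 / 6) ≤ η := by
    have hεne : ε ≠ 0 := ne_of_gt hε0
    have hmt : Real.log (2 / η) ≤ (m:ℝ) * t^2 / 6 := by
      rw [htdef]
      have h1 : 150 * ε⁻¹ ^ 2 * Real.log (2 / η) * ε^2 ≤ (m:ℝ) * ε^2 := by
        apply mul_le_mul_of_nonneg_right hm150 (sq_nonneg ε)
      have h2 : 150 * ε⁻¹ ^ 2 * Real.log (2 / η) * ε^2 = 150 * Real.log (2 / η) := by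
        field_simp
      rw [h2] at h1
      nlinarith
    have hexp : Real.exp (-(m:ℝ) * t^2 / 6) ≤ Real.exp (-Real.log (2 / η)) := by
      apply Real.exp_le_exp.2
      linarith
    have hval : Real.exp (-Real.log (2 / η)) = η / 2 := by
      rw [Real.exp_neg, Real.exp_log (by positivity)]
      field_simp
    rw [hval] at hexp
    linarith
  -- combine
  have hsplit : ∑ x ∈ Finset.range (m + 1), w x * (1 - (if cond x then 1 else 0))
      = 1 - ∑ x ∈ Finset.range (m + 1), w x * (if cond x then 1 else 0) := by
    have h := (Finset.sum_sub_distrib (s := Finset.range (m+1)) (f := w)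
      (g := fun x => w x * (if cond x then 1 else 0))).symm
    rw [show ∑ x ∈ Finset.range (m+1), (w x - w x * (if cond x then 1 else 0))
        = ∑ x ∈ Finset.range (m+1), w x * (1 - (if cond x then 1 else 0)) from
      Finset.sum_congr rfl (fun x _ => by ring)] at h
    rw [← h, hsum1]
  have hfin : 1 - η ≤ ∑ x ∈ Finset.range (m + 1), w x * (if cond x then 1 else 0) := by
    have := hsplit ▸ hbound
    linarith
  exact hfin.trans (le_of_eq (Finset.sum_congr rfl (fun x _ => by congr!)))
end

section
/- In any proper voting scheme for I(n,ε) with n ≥ 10 and ε ≤ 1/(n−1): (a) B_1 ≤ B_2 ≤ ⋯ ≤ B_n ≤ 9/n and 9/n ≥ R_1 ≥ R_2 ≥ ⋯ ≥ R_n; and (b) E_i(i) ≤ 9/n for every i = 1,…,n. -/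
/- STATEMENT 8: In any proper voting scheme for I(n,ε) with n ≥ 10 and ε ≤ 1/(n−1):
(a) B_1 ≤ ⋯ ≤ B_n ≤ 9/n and 9/n ≥ R_1 ≥ ⋯ ≥ R_n; (b) E_i(i) ≤ 9/n for all i. -/
set_option maxHeartbeats 1600000 in
theorem stmt_8
    (n : ℕ) (hn : 10 ≤ n)
    (ε : ℝ) (hε0 : 0 < ε) (hε1 : ε ≤ 1 / ((n : ℝ) - 1))
    (p : ℕ → ℝ) (hp : ∀ i, p i = (1 - ε * ((n : ℝ) - 1)) / 2 + ((i : ℝ) - 1) * ε)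
    (Bv Rv : ℕ → ℝ)
    (hBnn : ∀ j ∈ Finset.Icc 1 n, 0 ≤ Bv j)
    (hBsum : ∑ j ∈ Finset.Icc 1 n, Bv j = 1)
    (hRnn : ∀ j ∈ Finset.Icc 1 n, 0 ≤ Rv j)
    (hRsum : ∑ j ∈ Finset.Icc 1 n, Rv j = 1)
    (E : ℕ → ℕ → ℝ)
    (hE : ∀ i j, E i j = p i * Bv j + (1 - p i) * Rv j)
    (hproper : ∀ i ∈ Finset.Icc 1 n, ∀ j ∈ Finset.Icc 1 n, E i j ≤ E i i) :
    (∀ i ∈ Finset.Icc 1 n, ∀ j ∈ Finset.Icc 1 n, i ≤ j → Bv i ≤ Bv j) ∧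
    Bv n ≤ 9 / (n : ℝ) ∧
    (∀ i ∈ Finset.Icc 1 n, ∀ j ∈ Finset.Icc 1 n, i ≤ j → Rv j ≤ Rv i) ∧
    Rv 1 ≤ 9 / (n : ℝ) ∧
    (∀ i ∈ Finset.Icc 1 n, E i i ≤ 9 / (n : ℝ)) := by
  have hn10 : (10 : ℝ) ≤ (n : ℝ) := by exact_mod_cast hn
  have hn0 : (0 : ℝ) < (n : ℝ) := by linarith
  have hn1pos : (0 : ℝ) < (n : ℝ) - 1 := by linarith
  have hεn : ε * ((n : ℝ) - 1) ≤ 1 := by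
    have h := (le_div_iff₀ hn1pos).mp hε1
    linarith
  have hp0 : ∀ i ∈ Finset.Icc 1 n, 0 ≤ p i := by
    intro i hi
    rw [Finset.mem_Icc] at hi
    have h1 : (1 : ℝ) ≤ (i : ℝ) := by exact_mod_cast hi.1
    rw [hp]
    nlinarith [mul_nonneg (by linarith : (0:ℝ) ≤ (i : ℝ) - 1) hε0.le]
  have hp1 : ∀ i ∈ Finset.Icc 1 n, p i ≤ 1 := by
    intro i hi
    rw [Finset.mem_Icc] at hi
    have h2 : (i : ℝ) ≤ (n : ℝ) := by exact_mod_cast hi.2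
    rw [hp]
    nlinarith [mul_nonneg (by linarith : (0:ℝ) ≤ (n : ℝ) - (i : ℝ)) hε0.le]
  -- pairwise monotonicity from properness
  have key : ∀ i ∈ Finset.Icc 1 n, ∀ j ∈ Finset.Icc 1 n, i < j →
      Bv i ≤ Bv j ∧ Rv j ≤ Rv i := by
    intro i hi j hj hij
    have hpi0 := hp0 i hi
    have hpi1 := hp1 i hi
    have hpj0 := hp0 j hj
    have hpj1 := hp1 j hj
    have hplt : p i < p j := by
      rw [hp, hp]
      have hij' : (i : ℝ) < (j : ℝ) := by exact_mod_cast hij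
      nlinarith
    have h1 := hproper i hi j hj
    have h2 := hproper j hj i hi
    rw [hE, hE] at h1
    rw [hE, hE] at h2
    have hd : Rv j - Rv i ≤ Bv j - Bv i := by
      by_contra h
      push_neg at h
      nlinarith [mul_pos (sub_pos.mpr hplt)
        (by linarith : (0:ℝ) < (Rv j - Rv i) - (Bv j - Bv i))]
    constructor
    · by_contra h
      push_neg at h
      have hR : Rv j < Rv i := by linarith
      rcases eq_or_lt_of_le hpj0 with h0 | h0
      · rw [← h0] at h2
        linarith
      · nlinarith [mul_pos h0 (by linarith : (0:ℝ) < Bv i - Bv j),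
          mul_nonneg (by linarith : (0:ℝ) ≤ 1 - p j)
            (by linarith : (0:ℝ) ≤ Rv i - Rv j)]
    · by_contra h
      push_neg at h
      have hB : Bv i < Bv j := by linarith
      rcases eq_or_lt_of_le hpi1 with h0 | h0
      · rw [h0] at h1
        linarith
      · nlinarith [mul_pos (by linarith : (0:ℝ) < 1 - p i)
            (by linarith : (0:ℝ) < Rv j - Rv i),
          mul_nonneg hpi0 (by linarith : (0:ℝ) ≤ Bv j - Bv i)]
  have Bmono : ∀ i ∈ Finset.Icc 1 n, ∀ j ∈ Finset.Icc 1 n, i ≤ j → Bv i ≤ Bv j := by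
    intro i hi j hj hij
    rcases eq_or_lt_of_le hij with rfl | h
    · exact le_refl _
    · exact (key i hi j hj h).1
  have Ranti : ∀ i ∈ Finset.Icc 1 n, ∀ j ∈ Finset.Icc 1 n, i ≤ j → Rv j ≤ Rv i := by
    intro i hi j hj hij
    rcases eq_or_lt_of_le hij with rfl | h
    · exact le_refl _
    · exact (key i hi j hj h).2
  -- sum bounds
  have hBbd : ∀ m ∈ Finset.Icc 1 n, ((n : ℝ) - (m : ℝ) + 1) * Bv m ≤ 1 := by
    intro m hm
    have hm' := Finset.mem_Icc.mp hm
    have hsub : Finset.Icc m n ⊆ Finset.Icc 1 n := Finset.Icc_subset_Icc hm'.1 le_rfl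
    have h1 : ∑ j ∈ Finset.Icc m n, Bv j ≤ 1 := by
      rw [← hBsum]
      exact Finset.sum_le_sum_of_subset_of_nonneg hsub (fun j hj _ => hBnn j hj)
    have h2 : (Finset.Icc m n).card • Bv m ≤ ∑ j ∈ Finset.Icc m n, Bv j := by
      refine Finset.card_nsmul_le_sum _ _ _ (fun j hj => ?_)
      have hj' := Finset.mem_Icc.mp hj
      exact Bmono m hm j (Finset.mem_Icc.mpr ⟨le_trans hm'.1 hj'.1, hj'.2⟩) hj'.1
    rw [Nat.card_Icc, nsmul_eq_mul] at h2
    have hc : ((n + 1 - m : ℕ) : ℝ) = (n : ℝ) - (m : ℝ) + 1 := by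
      rw [Nat.cast_sub (by omega : m ≤ n + 1)]
      push_cast
      ring
    rw [hc] at h2
    linarith
  have hRbd : ∀ m ∈ Finset.Icc 1 n, (m : ℝ) * Rv m ≤ 1 := by
    intro m hm
    have hm' := Finset.mem_Icc.mp hm
    have hsub : Finset.Icc 1 m ⊆ Finset.Icc 1 n := Finset.Icc_subset_Icc le_rfl hm'.2
    have h1 : ∑ j ∈ Finset.Icc 1 m, Rv j ≤ 1 := by
      rw [← hRsum]
      exact Finset.sum_le_sum_of_subset_of_nonneg hsub (fun j hj _ => hRnn j hj)
    have h2 : (Finset.Icc 1 m).card • Rv m ≤ ∑ j ∈ Finset.Icc 1 m, Rv j := by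
      refine Finset.card_nsmul_le_sum _ _ _ (fun j hj => ?_)
      have hj' := Finset.mem_Icc.mp hj
      exact Ranti j (Finset.mem_Icc.mpr ⟨hj'.1, le_trans hj'.2 hm'.2⟩) m hm hj'.2
    rw [Nat.card_Icc, nsmul_eq_mul] at h2
    have hc : ((m + 1 - 1 : ℕ) : ℝ) = (m : ℝ) := by
      push_cast
      ring
    rw [hc] at h2
    linarith
  have h1mem : 1 ∈ Finset.Icc 1 n := Finset.mem_Icc.mpr ⟨le_refl 1, by omega⟩
  have hnmem : n ∈ Finset.Icc 1 n := Finset.mem_Icc.mpr ⟨by omega, le_refl n⟩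
  -- the B upper bound via the middle urn m = n/2 + 1
  have hBn4 : (n : ℝ) * Bv n ≤ 4 := by
    obtain ⟨q, hq1, hq2⟩ : ∃ q : ℕ, 2 * q ≤ n ∧ n ≤ 2 * q + 1 := ⟨n / 2, by omega, by omega⟩
    have hmmem : q + 1 ∈ Finset.Icc 1 n := Finset.mem_Icc.mpr ⟨by omega, by omega⟩
    have hqr1 : 2 * (q : ℝ) ≤ (n : ℝ) := by exact_mod_cast hq1
    have hqr2 : (n : ℝ) ≤ 2 * (q : ℝ) + 1 := by exact_mod_cast hq2
    have hmr : ((q + 1 : ℕ) : ℝ) = (q : ℝ) + 1 := by push_cast; ring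
    have hpm : 1 / 2 ≤ p (q + 1) := by
      rw [hp, hmr]
      nlinarith [mul_nonneg (by linarith : (0:ℝ) ≤ 2 * (q : ℝ) - ((n : ℝ) - 1)) hε0.le]
    have hpm1 := hp1 (q + 1) hmmem
    have hBm : (n : ℝ) * Bv (q + 1) ≤ 2 := by
      have := hBbd (q + 1) hmmem
      rw [hmr] at this
      nlinarith [mul_nonneg (by linarith : (0:ℝ) ≤ ((n : ℝ) - ((q : ℝ) + 1) + 1) - (n : ℝ) / 2)
        (hBnn (q + 1) hmmem)]
    have hRm : (n : ℝ) * Rv (q + 1) ≤ 2 := by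
      have := hRbd (q + 1) hmmem
      rw [hmr] at this
      nlinarith [mul_nonneg (by linarith : (0:ℝ) ≤ ((q : ℝ) + 1) - (n : ℝ) / 2)
        (hRnn (q + 1) hmmem)]
    have hpr := hproper (q + 1) hmmem n hnmem
    rw [hE, hE] at hpr
    have hprn := mul_le_mul_of_nonneg_left hpr hn0.le
    have hEmm : (n : ℝ) * (p (q + 1) * Bv (q + 1) + (1 - p (q + 1)) * Rv (q + 1)) ≤ 2 := by
      linarith [mul_nonneg (by linarith : (0:ℝ) ≤ p (q + 1))
          (by linarith : (0:ℝ) ≤ 2 - (n : ℝ) * Bv (q + 1)),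
        mul_nonneg (by linarith : (0:ℝ) ≤ 1 - p (q + 1))
          (by linarith : (0:ℝ) ≤ 2 - (n : ℝ) * Rv (q + 1))]
    have h3 : (n : ℝ) * (p (q + 1) * Bv n) ≤ 2 := by
      linarith [hprn, hEmm, mul_nonneg (by linarith : (0:ℝ) ≤ 1 - p (q + 1))
        (mul_nonneg hn0.le (hRnn n hnmem))]
    linarith [h3, mul_nonneg (by linarith : (0:ℝ) ≤ p (q + 1) - 1 / 2)
      (mul_nonneg hn0.le (hBnn n hnmem))]
  -- the R upper bound via the middle urn m' with n ≤ 2 m' ≤ n + 1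
  have hR14 : (n : ℝ) * Rv 1 ≤ 4 := by
    obtain ⟨m, hq1, hq2⟩ : ∃ m : ℕ, n ≤ 2 * m ∧ 2 * m ≤ n + 1 := ⟨(n + 1) / 2, by omega, by omega⟩
    have hmmem : m ∈ Finset.Icc 1 n := Finset.mem_Icc.mpr ⟨by omega, by omega⟩
    have hqr1 : (n : ℝ) ≤ 2 * (m : ℝ) := by exact_mod_cast hq1
    have hqr2 : 2 * (m : ℝ) ≤ (n : ℝ) + 1 := by exact_mod_cast hq2
    have hpm : p m ≤ 1 / 2 := by
      rw [hp]
      nlinarith [mul_nonneg (by linarith : (0:ℝ) ≤ ((n : ℝ) - 1) - 2 * ((m : ℝ) - 1)) hε0.le]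
    have hpm0 := hp0 m hmmem
    have hBm : (n : ℝ) * Bv m ≤ 2 := by
      have := hBbd m hmmem
      nlinarith [mul_nonneg (by linarith : (0:ℝ) ≤ ((n : ℝ) - (m : ℝ) + 1) - (n : ℝ) / 2)
        (hBnn m hmmem)]
    have hRm : (n : ℝ) * Rv m ≤ 2 := by
      have := hRbd m hmmem
      nlinarith [mul_nonneg (by linarith : (0:ℝ) ≤ (m : ℝ) - (n : ℝ) / 2) (hRnn m hmmem)]
    have hpr := hproper m hmmem 1 h1mem
    rw [hE, hE] at hpr
    have hprn := mul_le_mul_of_nonneg_left hpr hn0.le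
    have hEmm : (n : ℝ) * (p m * Bv m + (1 - p m) * Rv m) ≤ 2 := by
      linarith [mul_nonneg (by linarith : (0:ℝ) ≤ p m)
          (by linarith : (0:ℝ) ≤ 2 - (n : ℝ) * Bv m),
        mul_nonneg (by linarith : (0:ℝ) ≤ 1 - p m)
          (by linarith : (0:ℝ) ≤ 2 - (n : ℝ) * Rv m)]
    have h3 : (n : ℝ) * ((1 - p m) * Rv 1) ≤ 2 := by
      linarith [hprn, hEmm, mul_nonneg (by linarith : (0:ℝ) ≤ p m)
        (mul_nonneg hn0.le (hBnn 1 h1mem))]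
    linarith [h3, mul_nonneg (by linarith : (0:ℝ) ≤ 1 / 2 - p m)
      (mul_nonneg hn0.le (hRnn 1 h1mem))]
  refine ⟨Bmono, ?_, Ranti, ?_, ?_⟩
  · rw [le_div_iff₀ hn0]
    nlinarith
  · rw [le_div_iff₀ hn0]
    nlinarith
  · intro i hi
    rw [hE, le_div_iff₀ hn0]
    have hBi : Bv i ≤ Bv n := Bmono i hi n hnmem (Finset.mem_Icc.mp hi).2
    have hRi : Rv i ≤ Rv 1 := Ranti 1 h1mem i hi (Finset.mem_Icc.mp hi).1
    have hpi0 := hp0 i hi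
    have hpi1 := hp1 i hi
    have hstep : p i * Bv i + (1 - p i) * Rv i ≤ p i * Bv n + (1 - p i) * Rv 1 := by
      linarith [mul_nonneg hpi0 (by linarith : (0:ℝ) ≤ Bv n - Bv i),
        mul_nonneg (by linarith : (0:ℝ) ≤ 1 - p i) (by linarith : (0:ℝ) ≤ Rv 1 - Rv i)]
    have hstep2 : (n : ℝ) * (p i * Bv n + (1 - p i) * Rv 1) ≤ 4 := by
      linarith [mul_nonneg hpi0 (by linarith : (0:ℝ) ≤ 4 - (n : ℝ) * Bv n),
        mul_nonneg (by linarith : (0:ℝ) ≤ 1 - p i) (by linarith : (0:ℝ) ≤ 4 - (n : ℝ) * Rv 1)]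
    linarith [hstep2, mul_le_mul_of_nonneg_left hstep hn0.le]
end

section
/- Let 0 ≤ p_1 < p_2 < ⋯ < p_n ≤ 1 and let (B_1,…,B_n) and (R_1,…,R_n) be probability vectors on {1,…,n}. Define E_i(j) = p_i·B_j + (1−p_i)·R_j, and suppose the scheme is proper, i.e. E_i(i) ≥ E_i(j) for all i, j. Then for all i < j one has B_i ≤ B_j and R_i ≥ R_j. -/
/- STATEMENT 10: In any proper scheme (E_i(i) ≥ E_i(j) for all i,j) with
0 ≤ p_1 < ⋯ < p_n ≤ 1, for all i < j one has B_i ≤ B_j and R_i ≥ R_j. -/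
theorem stmt_10
    (n : ℕ)
    (p : ℕ → ℝ)
    (hp0 : 0 ≤ p 1) (hp1 : p n ≤ 1)
    (hmono : ∀ i ∈ Finset.Ico 1 n, p i < p (i + 1))
    (Bv Rv : ℕ → ℝ)
    (hBnn : ∀ j ∈ Finset.Icc 1 n, 0 ≤ Bv j)
    (hBsum : ∑ j ∈ Finset.Icc 1 n, Bv j = 1)
    (hRnn : ∀ j ∈ Finset.Icc 1 n, 0 ≤ Rv j)
    (hRsum : ∑ j ∈ Finset.Icc 1 n, Rv j = 1)
    (E : ℕ → ℕ → ℝ)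
    (hE : ∀ i j, E i j = p i * Bv j + (1 - p i) * Rv j)
    (hproper : ∀ i ∈ Finset.Icc 1 n, ∀ j ∈ Finset.Icc 1 n, E i j ≤ E i i) :
    ∀ i ∈ Finset.Icc 1 n, ∀ j ∈ Finset.Icc 1 n, i < j → Bv i ≤ Bv j ∧ Rv j ≤ Rv i := by
  have hlt : ∀ m, m ≤ n → ∀ k, 1 ≤ k → k < m → p k < p m := by
    intro m
    induction m with
    | zero => omega
    | succ m ih =>
      intro hm k hk hkm
      rcases Nat.lt_or_ge k m with h | h
      · exact lt_trans (ih (by omega) k hk h)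
          (hmono m (Finset.mem_Ico.mpr ⟨by omega, by omega⟩))
      · have : k = m := by omega
        subst this
        exact hmono k (Finset.mem_Ico.mpr ⟨by omega, by omega⟩)
  intro i hi j hj hij
  rw [Finset.mem_Icc] at hi hj
  have hpij : p i < p j := hlt j hj.2 i hi.1 hij
  have hpi0 : 0 ≤ p i := by
    rcases Nat.eq_or_lt_of_le hi.1 with h | h
    · rw [← h]; exact hp0
    · exact le_of_lt (lt_of_le_of_lt hp0 (hlt i hi.2 1 le_rfl h))
  have hpj1 : p j ≤ 1 := by
    rcases Nat.eq_or_lt_of_le hj.2 with h | h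
    · rw [h]; exact hp1
    · exact le_of_lt (lt_of_lt_of_le (hlt n le_rfl j hj.1 h) hp1)
  have h1 := hproper i (Finset.mem_Icc.mpr hi) j (Finset.mem_Icc.mpr hj)
  have h2 := hproper j (Finset.mem_Icc.mpr hj) i (Finset.mem_Icc.mpr hi)
  rw [hE, hE] at h1 h2
  constructor
  · nlinarith [mul_le_mul_of_nonneg_left h1 (by linarith : (0:ℝ) ≤ 1 - p j),
      mul_le_mul_of_nonneg_left h2 (by linarith : (0:ℝ) ≤ 1 - p i)]
  · nlinarith [mul_le_mul_of_nonneg_left h1 (by linarith : (0:ℝ) ≤ p j),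
      mul_le_mul_of_nonneg_left h2 hpi0]
end

section
/- Let p ∈ [1/4, 3/4] and let B_i, B_j, R_i, R_j ∈ [0,1] satisfy B_i + B_j ≤ 1 and R_i + R_j ≤ 1. Let Z be the random variable taking value 0 with probability a = p·B_i + (1−p)·R_i, value 1 with probability b = p·B_j + (1−p)·R_j, and value 1/2 with probability 1 − a − b. Then the variance of Z is at least |R_i − B_i|/64; equivalently, with μ = b + (1−a−b)/2, a·μ² + b·(1−μ)² + (1−a−b)·(1/2−μ)² ≥ |R_i − B_i|/64. -/
/-! With `μ` the mean, the variance of `Z` equals `((a + b)(1 - a - b) + 4ab)/4 ≥ a(1 - a)/4`.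
Since `p` and `1 - p` are both at least `1/4`, the probability `a = p Bi + (1 - p) Ri` and its
complement `1 - a = p (1 - Bi) + (1 - p) (1 - Ri)` are both at least `|Ri - Bi|/4`; as one of
`a`, `1 - a` is at least `1/2`, this gives `a(1 - a) ≥ |Ri - Bi|/8`. -/

lemma mul_abs_sub_le_add_mul {c p q x y : ℝ} (hc : 0 ≤ c) (hp : c ≤ p) (hq : c ≤ q)
    (hx : 0 ≤ x) (hy : 0 ≤ y) : c * |y - x| ≤ p * x + q * y := by
  rcases abs_cases (y - x) with ⟨h, _⟩ | ⟨h, _⟩ <;> rw [h] <;>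
    nlinarith [mul_le_mul_of_nonneg_right hp hx, mul_le_mul_of_nonneg_right hq hy]

lemma half_le_mul_one_sub {s a : ℝ} (hs0 : 0 ≤ s) (hs : s ≤ a) (hs' : s ≤ 1 - a) :
    s / 2 ≤ a * (1 - a) := by
  rcases le_total a (1 / 2) with h | h
  · nlinarith [mul_le_mul_of_nonneg_left (by linarith : 1 / 2 ≤ 1 - a) (hs0.trans hs)]
  · nlinarith [mul_le_mul_of_nonneg_right h (hs0.trans hs')]

lemma mul_one_sub_div_four_le_three_point_variance {a b : ℝ} (ha : 0 ≤ a) (hb : 0 ≤ b)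
    (hab : a + b ≤ 1) (μ : ℝ) (hμ : μ = b + (1 - a - b) / 2) :
    a * (1 - a) / 4 ≤ a * μ ^ 2 + b * (1 - μ) ^ 2 + (1 - a - b) * (1 / 2 - μ) ^ 2 := by
  have hvar : a * μ ^ 2 + b * (1 - μ) ^ 2 + (1 - a - b) * (1 / 2 - μ) ^ 2
      = (a * (1 - a) + b * (1 - a - b) + 3 * (a * b)) / 4 := by
    rw [hμ]; ring
  rw [hvar]
  have := mul_nonneg hb (sub_nonneg.2 hab)
  have := mul_nonneg ha hb
  linarith

theorem stmt_12
    (p Bi Bj Ri Rj : ℝ)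
    (hp : 1 / 4 ≤ p) (hp' : p ≤ 3 / 4)
    (hBi : Bi ∈ Set.Icc (0 : ℝ) 1) (hBj : Bj ∈ Set.Icc (0 : ℝ) 1)
    (hRi : Ri ∈ Set.Icc (0 : ℝ) 1) (hRj : Rj ∈ Set.Icc (0 : ℝ) 1)
    (hBsum : Bi + Bj ≤ 1) (hRsum : Ri + Rj ≤ 1)
    (a b μ : ℝ)
    (ha : a = p * Bi + (1 - p) * Ri)
    (hb : b = p * Bj + (1 - p) * Rj)
    (hμ : μ = b + (1 - a - b) / 2) :
    |Ri - Bi| / 64 ≤ a * μ ^ 2 + b * (1 - μ) ^ 2 + (1 - a - b) * (1 / 2 - μ) ^ 2 := by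
  obtain ⟨hBi0, hBi1⟩ := hBi
  obtain ⟨hRi0, hRi1⟩ := hRi
  have hp0 : 0 ≤ p := by linarith
  have hq0 : 0 ≤ 1 - p := by linarith
  have ha0 : 0 ≤ a := ha ▸ by positivity
  have hb0 : 0 ≤ b := hb ▸ add_nonneg (mul_nonneg hp0 hBj.1) (mul_nonneg hq0 hRj.1)
  have hab : a + b ≤ 1 := by
    rw [ha, hb]
    nlinarith [mul_le_mul_of_nonneg_left hBsum hp0, mul_le_mul_of_nonneg_left hRsum hq0]
  have hlo : 1 / 4 * |Ri - Bi| ≤ a :=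
    ha ▸ mul_abs_sub_le_add_mul (by norm_num) hp (by linarith) hBi0 hRi0
  have hhi : 1 / 4 * |Ri - Bi| ≤ 1 - a := by
    have := mul_abs_sub_le_add_mul (by norm_num) hp (by linarith : 1 / 4 ≤ 1 - p)
      (sub_nonneg.2 hBi1) (sub_nonneg.2 hRi1)
    rw [abs_sub_comm, sub_sub_sub_cancel_left] at this
    linarith
  calc |Ri - Bi| / 64 ≤ 1 / 4 * |Ri - Bi| / 2 / 4 := by linarith [abs_nonneg (Ri - Bi)]
    _ ≤ a * (1 - a) / 4 := by gcongr; exact half_le_mul_one_sub (by positivity) hlo hhi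
    _ ≤ _ := mul_one_sub_div_four_le_three_point_variance ha0 hb0 hab μ hμ
end

section
/- Let p₀, p_h, p₁ be nonnegative reals with p₀ + p_h + p₁ = 1, and let Z be the random variable taking the value 0 with probability p₀, the value 1/2 with probability p_h, and the value 1 with probability p₁. Then the variance of Z is at least (1 − max(p₀, p_h, p₁))/48; equivalently, with μ = p₁ + p_h/2, p₁·(1−μ)² + p_h·(1/2−μ)² + p₀·μ² ≥ (1 − max(p₀, p_h, p₁))/48. -/
/- STATEMENT 13: For Z taking values 0, 1/2, 1 with probabilities p₀, p_h, p₁,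
Var(Z) ≥ (1 − max(p₀, p_h, p₁))/48. -/
theorem stmt_13
    (p₀ ph p₁ μ : ℝ)
    (h0 : 0 ≤ p₀) (hh : 0 ≤ ph) (h1 : 0 ≤ p₁)
    (hsum : p₀ + ph + p₁ = 1)
    (hμ : μ = p₁ + ph / 2) :
    (1 - max p₀ (max ph p₁)) / 48 ≤
      p₁ * (1 - μ) ^ 2 + ph * (1 / 2 - μ) ^ 2 + p₀ * μ ^ 2 := by
  subst hμ
  have hvar : p₁ * (1 - (p₁ + ph / 2)) ^ 2 + ph * (1 / 2 - (p₁ + ph / 2)) ^ 2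
      + p₀ * (p₁ + ph / 2) ^ 2 = p₀ * p₁ + ph * (p₀ + p₁) / 4 := by
    nlinarith [hsum]
  rw [hvar]
  rcases le_total p₀ (max ph p₁) with h | h
  · rw [max_eq_right h]
    rcases le_total ph p₁ with h2 | h2
    · rw [max_eq_right h2]
      have hp : p₀ ≤ p₁ := by rw [max_eq_right h2] at h; exact h
      have hm : 1 ≤ 3 * p₁ := by linarith
      nlinarith [mul_nonneg h0 (by linarith : (0:ℝ) ≤ 3 * p₁ - 1),
        mul_nonneg hh (by linarith : (0:ℝ) ≤ 3 * p₁ - 1), mul_nonneg h0 hh]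
    · rw [max_eq_left h2]
      have hp : p₀ ≤ ph := by rw [max_eq_left h2] at h; exact h
      have hm : 1 ≤ 3 * ph := by linarith
      nlinarith [mul_nonneg h0 (by linarith : (0:ℝ) ≤ 3 * ph - 1),
        mul_nonneg h1 (by linarith : (0:ℝ) ≤ 3 * ph - 1), mul_nonneg h0 h1]
  · rw [max_eq_left h]
    have h2 := le_of_max_le_left h
    have h3 := le_of_max_le_right h
    have hm : 1 ≤ 3 * p₀ := by linarith
    nlinarith [mul_nonneg hh (by linarith : (0:ℝ) ≤ 3 * p₀ - 1),
      mul_nonneg h1 (by linarith : (0:ℝ) ≤ 3 * p₀ - 1), mul_nonneg hh h1]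
end

section
/- For every p ∈ [0,1] and every k with 1 ≤ k ≤ n'−1: (p·b_{k+1} + (1−p)·r_{k+1}) − (p·b_k + (1−p)·r_k) = (2p − (p'_{k+1} + p'_k))/(p'_{k+1} − p'_k). Consequently, if p ≥ p'_{k+1} then p·b_{k+1} + (1−p)·r_{k+1} > p·b_k + (1−p)·r_k, and if p ≤ p'_k then p·b_k + (1−p)·r_k > p·b_{k+1} + (1−p)·r_{k+1}; hence any index k maximizing k ↦ p·b_k + (1−p)·r_k over {1,…,n'} satisfies p > p'_{k−1} (when k ≥ 2) and p < p'_{k+1} (when k ≤ n'−1), i.e. k is the largest index with p'_k ≤ p or the smallest index with p'_k ≥ p. -/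
/- STATEMENT 15: Landmark identity and its consequences: the difference of the scores of
consecutive landmarks equals (2p − (p'_{k+1}+p'_k))/(p'_{k+1}−p'_k); hence any maximizing
landmark index k satisfies p'_{k−1} < p (when k ≥ 2) and p < p'_{k+1} (when k ≤ n'−1). -/
theorem stmt_15
    (n' : ℕ) (hn' : 2 ≤ n')
    (p' : ℕ → ℝ)
    (hp'0 : 0 ≤ p' 1) (hp'1 : p' n' ≤ 1)
    (hp'mono : ∀ k ∈ Finset.Ico 1 n', p' k < p' (k + 1))
    (b r : ℕ → ℝ)
    (hb : ∀ k, b k = ∑ ℓ ∈ Finset.Ico 1 k, (2 - (p' (ℓ + 1) + p' ℓ)) / (p' (ℓ + 1) - p' ℓ))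
    (hr : ∀ k, r k = ∑ ℓ ∈ Finset.Ico k n', (p' (ℓ + 1) + p' ℓ) / (p' (ℓ + 1) - p' ℓ))
    (p : ℝ) (hp0 : 0 ≤ p) (hp1 : p ≤ 1) :
    (∀ k, 1 ≤ k → k < n' →
      (p * b (k + 1) + (1 - p) * r (k + 1)) - (p * b k + (1 - p) * r k) =
        (2 * p - (p' (k + 1) + p' k)) / (p' (k + 1) - p' k)) ∧
    (∀ k, 1 ≤ k → k < n' → p' (k + 1) ≤ p →
      p * b k + (1 - p) * r k < p * b (k + 1) + (1 - p) * r (k + 1)) ∧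
    (∀ k, 1 ≤ k → k < n' → p ≤ p' k →
      p * b (k + 1) + (1 - p) * r (k + 1) < p * b k + (1 - p) * r k) ∧
    (∀ k ∈ Finset.Icc 1 n',
      (∀ k' ∈ Finset.Icc 1 n', p * b k' + (1 - p) * r k' ≤ p * b k + (1 - p) * r k) →
      (2 ≤ k → p' (k - 1) < p) ∧ (k < n' → p < p' (k + 1))) := by

  have hd : ∀ k, 1 ≤ k → k < n' → 0 < p' (k + 1) - p' k := fun k h1 h2 =>
    sub_pos.mpr (hp'mono k (Finset.mem_Ico.mpr ⟨h1, h2⟩))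
  have key : ∀ k, 1 ≤ k → k < n' →
      (p * b (k + 1) + (1 - p) * r (k + 1)) - (p * b k + (1 - p) * r k) =
        (2 * p - (p' (k + 1) + p' k)) / (p' (k + 1) - p' k) := by
    intro k h1 h2
    have hbk : b (k + 1) = b k + (2 - (p' (k + 1) + p' k)) / (p' (k + 1) - p' k) := by
      rw [hb, hb, Finset.sum_Ico_succ_top h1]
    have hrk : r k = (p' (k + 1) + p' k) / (p' (k + 1) - p' k) + r (k + 1) := by
      rw [hr, hr, Finset.sum_eq_sum_Ico_succ_bot h2]
    have hd' : p' (k + 1) - p' k ≠ 0 := (hd k h1 h2).ne'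
    rw [hbk, hrk]
    field_simp
    ring
  have pos : ∀ k, 1 ≤ k → k < n' → p' (k + 1) ≤ p →
      p * b k + (1 - p) * r k < p * b (k + 1) + (1 - p) * r (k + 1) := by
    intro k h1 h2 hp
    have hlt := hp'mono k (Finset.mem_Ico.mpr ⟨h1, h2⟩)
    have : 0 < (2 * p - (p' (k + 1) + p' k)) / (p' (k + 1) - p' k) :=
      div_pos (by linarith) (hd k h1 h2)
    linarith [key k h1 h2]
  have neg : ∀ k, 1 ≤ k → k < n' → p ≤ p' k →
      p * b (k + 1) + (1 - p) * r (k + 1) < p * b k + (1 - p) * r k := by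
    intro k h1 h2 hp
    have hlt := hp'mono k (Finset.mem_Ico.mpr ⟨h1, h2⟩)
    have : (2 * p - (p' (k + 1) + p' k)) / (p' (k + 1) - p' k) < 0 :=
      div_neg_of_neg_of_pos (by linarith) (hd k h1 h2)
    linarith [key k h1 h2]
  refine ⟨key, pos, neg, ?_⟩
  intro k hk hmax
  obtain ⟨hk1, hkn⟩ := Finset.mem_Icc.mp hk
  constructor
  · intro h2
    by_contra hcon
    push_neg at hcon
    have hk1' : 1 ≤ k - 1 := by omega
    have hkn' : k - 1 < n' := by omega
    have heq : k - 1 + 1 = k := by omega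
    have := neg (k - 1) hk1' hkn' (heq ▸ hcon)
    rw [heq] at this
    exact absurd (hmax (k - 1) (Finset.mem_Icc.mpr ⟨hk1', by omega⟩)) (not_le.mpr this)
  · intro h2
    by_contra hcon
    push_neg at hcon
    have := pos k hk1 h2 hcon
    exact absurd (hmax (k + 1) (Finset.mem_Icc.mpr ⟨by omega, by omega⟩)) (not_le.mpr this)
end

section
/- For all urns i, j ∈ {1,…,n}: Δ_i(j) ≥ max(|φ(i) − φ(j)| − 1, 0)/M; moreover, if p_i = p'_k for some landmark index k, then Δ_i(j) ≥ |φ(i) − φ(j)|/M. -/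
private lemma qmono (n' : ℕ) (q : ℕ → ℝ)
    (hq : ∀ k ∈ Finset.Ico 1 n', q k < q (k+1)) :
    ∀ k l, 1 ≤ k → k ≤ l → l ≤ n' → q k ≤ q l := by
  intro k l hk hkl hl
  induction l, hkl using Nat.le_induction with
  | base => exact le_rfl
  | succ m hm ih =>
    have h2 := hq m (Finset.mem_Ico.mpr ⟨by omega, by omega⟩)
    have h3 := ih (by omega)
    linarith

private lemma telescope (F : ℕ → ℝ) {c a : ℕ} (h : c ≤ a) :
    ∑ k ∈ Finset.Ico c a, (F (k+1) - F k) = F a - F c := by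
  rw [Finset.sum_Ico_eq_sub _ h, Finset.sum_range_sub, Finset.sum_range_sub]
  ring

private lemma aux_lt (n' : ℕ) (q : ℕ → ℝ)
    (hq : ∀ k ∈ Finset.Ico 1 n', q k < q (k+1))
    (t : ℝ) (F : ℕ → ℝ)
    (hF : ∀ k ∈ Finset.Ico 1 n',
      F (k+1) - F k = (2*t - q (k+1) - q k) / (q (k+1) - q k))
    (a c : ℕ) (ha2 : a ≤ n') (hc1 : 1 ≤ c)
    (hmax : ∀ k ∈ Finset.Icc 1 n', F k ≤ F a)
    (hca : c < a) :
    ((a : ℝ) - c - 1 ≤ F a - F c) ∧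
      ((∃ m, 1 ≤ m ∧ m ≤ n' ∧ t = q m) → (a : ℝ) - c ≤ F a - F c) := by
  have hd : ∀ k, 1 ≤ k → k < n' → 0 < q (k+1) - q k := fun k h1 h2 =>
    sub_pos.mpr (hq k (Finset.mem_Ico.mpr ⟨h1, h2⟩))
  have gnn : ∀ k, 1 ≤ k → k < a → 0 ≤ F (k+1) - F k := by
    intro k h1 h2
    by_contra hneg
    push_neg at hneg
    have hkn : k < n' := by omega
    have hdn := hd k h1 hkn
    have hFk := hF k (Finset.mem_Ico.mpr ⟨h1, hkn⟩)
    have hnum : 2*t - q (k+1) - q k < 0 := by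
      by_contra h
      push_neg at h
      have h5 : 0 ≤ (2*t - q (k+1) - q k) / (q (k+1) - q k) := div_nonneg h hdn.le
      rw [← hFk] at h5
      linarith
    have hdec : ∀ m, k+1 ≤ m → m ≤ n' → F m ≤ F (k+1) := by
      intro m hm
      induction m, hm using Nat.le_induction with
      | base => intro _; exact le_rfl
      | succ m hm ih =>
        intro hmn
        have hm1 : m < n' := by omega
        have hFm := hF m (Finset.mem_Ico.mpr ⟨by omega, hm1⟩)
        have hq1 : q k ≤ q m := qmono n' q hq k m h1 (by omega) (by omega)
        have hq2 : q (k+1) ≤ q (m+1) := qmono n' q hq (k+1) (m+1) (by omega) (by omega) (by omega)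
        have hdm := hd m (by omega) hm1
        have h6 : F (m+1) - F m < 0 := by
          rw [hFm]
          exact div_neg_of_neg_of_pos (by linarith) hdm
        linarith [ih (by omega)]
    have h3 : F a ≤ F (k+1) := hdec a (by omega) ha2
    have h4 : F k ≤ F a := hmax k (Finset.mem_Icc.mpr ⟨h1, by omega⟩)
    linarith
  have step : ∀ k, 1 ≤ k → k < a → q (k+1) ≤ t → 1 ≤ F (k+1) - F k := by
    intro k h1 h2 ht
    have hkn : k < n' := by omega
    rw [hF k (Finset.mem_Ico.mpr ⟨h1, hkn⟩), le_div_iff₀ (hd k h1 hkn)]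
    have h5 : q k < q (k+1) := hq k (Finset.mem_Ico.mpr ⟨h1, hkn⟩)
    linarith
  have gge1 : ∀ k, 1 ≤ k → k + 1 < a → 1 ≤ F (k+1) - F k := by
    intro k h1 h2
    apply step k h1 (by omega)
    by_contra ht
    push_neg at ht
    have h3 : k + 1 < n' := by omega
    have h4 := gnn (k+1) (by omega) (by omega)
    rw [hF (k+1) (Finset.mem_Ico.mpr ⟨by omega, h3⟩)] at h4
    have hdm := hd (k+1) (by omega) h3
    have hnum := (le_div_iff₀ hdm).mp h4
    have hq2 : q (k+1) < q (k+1+1) := hq (k+1) (Finset.mem_Ico.mpr ⟨by omega, h3⟩)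
    nlinarith
  have glm : (∃ m, 1 ≤ m ∧ m ≤ n' ∧ t = q m) → ∀ k, 1 ≤ k → k < a → 1 ≤ F (k+1) - F k := by
    rintro ⟨m, hm1, hm2, rfl⟩ k h1 h2
    apply step k h1 h2
    by_contra ht
    push_neg at ht
    have hkn : k < n' := by omega
    have hnn := gnn k h1 h2
    rw [hF k (Finset.mem_Ico.mpr ⟨h1, hkn⟩)] at hnn
    have hdm := hd k h1 hkn
    have hnum := (le_div_iff₀ hdm).mp hnn
    have h5 : q k < q m := by
      have := hq k (Finset.mem_Ico.mpr ⟨h1, hkn⟩)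
      nlinarith
    have hkm : k < m := by
      by_contra h
      push_neg at h
      have := qmono n' q hq m k hm1 h (by omega)
      linarith
    have := qmono n' q hq (k+1) m (by omega) hkm hm2
    linarith
  obtain ⟨a', rfl⟩ : ∃ a', a = a' + 1 := ⟨a - 1, by omega⟩
  have htel : ∑ k ∈ Finset.Ico c (a'+1), (F (k+1) - F k) = F (a'+1) - F c :=
    telescope F (by omega)
  have hsplit : ∑ k ∈ Finset.Ico c (a'+1), (F (k+1) - F k)
      = (∑ k ∈ Finset.Ico c a', (F (k+1) - F k)) + (F (a'+1) - F a') :=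
    Finset.sum_Ico_succ_top (by omega) _
  have hsum1 : ((a':ℝ) - c) ≤ ∑ k ∈ Finset.Ico c a', (F (k+1) - F k) := by
    calc ((a':ℝ) - c) = ∑ _k ∈ Finset.Ico c a', (1:ℝ) := by
          rw [Finset.sum_const, nsmul_eq_mul, mul_one, Nat.card_Ico,
            Nat.cast_sub (by omega)]
    _ ≤ _ := Finset.sum_le_sum (fun k hk => by
          have := Finset.mem_Ico.mp hk
          exact gge1 k (by omega) (by omega))
  have hlast : 0 ≤ F (a'+1) - F a' := gnn a' (by omega) (by omega)
  constructor
  · push_cast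
    linarith
  · intro hlm
    have h7 : 1 ≤ F (a'+1) - F a' := glm hlm a' (by omega) (by omega)
    push_cast
    linarith

private lemma aux_gt (n' : ℕ) (q : ℕ → ℝ)
    (hq : ∀ k ∈ Finset.Ico 1 n', q k < q (k+1))
    (t : ℝ) (F : ℕ → ℝ)
    (hF : ∀ k ∈ Finset.Ico 1 n',
      F (k+1) - F k = (2*t - q (k+1) - q k) / (q (k+1) - q k))
    (a c : ℕ) (ha1 : 1 ≤ a) (hc2 : c ≤ n')
    (hmax : ∀ k ∈ Finset.Icc 1 n', F k ≤ F a)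
    (hac : a < c) :
    ((c : ℝ) - a - 1 ≤ F a - F c) ∧
      ((∃ m, 1 ≤ m ∧ m ≤ n' ∧ t = q m) → (c : ℝ) - a ≤ F a - F c) := by
  have hd : ∀ k, 1 ≤ k → k < n' → 0 < q (k+1) - q k := fun k h1 h2 =>
    sub_pos.mpr (hq k (Finset.mem_Ico.mpr ⟨h1, h2⟩))
  have hnn : ∀ k, a ≤ k → k < c → 0 ≤ F k - F (k+1) := by
    intro k h1 h2
    by_contra hneg
    push_neg at hneg
    have hkn : k < n' := by omega
    have hdn := hd k (by omega) hkn
    have hFk := hF k (Finset.mem_Ico.mpr ⟨by omega, hkn⟩)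
    have hnum : 0 < 2*t - q (k+1) - q k := by
      by_contra h
      push_neg at h
      have h5 : (2*t - q (k+1) - q k) / (q (k+1) - q k) ≤ 0 :=
        div_nonpos_of_nonpos_of_nonneg h hdn.le
      rw [← hFk] at h5
      linarith
    have hinc : ∀ m, a ≤ m → m ≤ k → F a ≤ F m := by
      intro m hm
      induction m, hm using Nat.le_induction with
      | base => intro _; exact le_rfl
      | succ m hm ih =>
        intro hmk
        have hm1 : m < n' := by omega
        have hFm := hF m (Finset.mem_Ico.mpr ⟨by omega, hm1⟩)
        have hq1 : q m ≤ q k := qmono n' q hq m k (by omega) (by omega) (by omega)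
        have hq2 : q (m+1) ≤ q (k+1) := qmono n' q hq (m+1) (k+1) (by omega) (by omega) (by omega)
        have hdm := hd m (by omega) hm1
        have h6 : 0 < F (m+1) - F m := by
          rw [hFm]
          exact div_pos (by linarith) hdm
        linarith [ih (by omega)]
    have h3 : F a ≤ F k := hinc k h1 le_rfl
    have h4 : F (k+1) ≤ F a := hmax (k+1) (Finset.mem_Icc.mpr ⟨by omega, by omega⟩)
    linarith
  have step : ∀ k, a ≤ k → k < c → t ≤ q k → 1 ≤ F k - F (k+1) := by
    intro k h1 h2 ht
    have hkn : k < n' := by omega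
    have hdn := hd k (by omega) hkn
    have hFk := hF k (Finset.mem_Ico.mpr ⟨by omega, hkn⟩)
    have h5 : q k < q (k+1) := hq k (Finset.mem_Ico.mpr ⟨by omega, hkn⟩)
    have h6 : (2*t - q (k+1) - q k) / (q (k+1) - q k) ≤ -1 := by
      rw [div_le_iff₀ hdn]
      linarith
    linarith
  have hge1 : ∀ k, a < k → k < c → 1 ≤ F k - F (k+1) := by
    intro k h1 h2
    apply step k (by omega) h2
    by_contra ht
    push_neg at ht
    obtain ⟨m, rfl⟩ : ∃ m, k = m + 1 := ⟨k - 1, by omega⟩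
    have hm1 : m < n' := by omega
    have hdm := hd m (by omega) hm1
    have h4 := hnn m (by omega) (by omega)
    rw [show F m - F (m+1) = -(F (m+1) - F m) by ring,
      hF m (Finset.mem_Ico.mpr ⟨by omega, hm1⟩)] at h4
    have hnum : 2*t - q (m+1) - q m ≤ 0 := by
      by_contra h
      push_neg at h
      have := div_pos h hdm
      linarith
    have hq2 : q m < q (m+1) := hq m (Finset.mem_Ico.mpr ⟨by omega, hm1⟩)
    linarith
  have hlm : (∃ m, 1 ≤ m ∧ m ≤ n' ∧ t = q m) → ∀ k, a ≤ k → k < c → 1 ≤ F k - F (k+1) := by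
    rintro ⟨m, hm1, hm2, rfl⟩ k h1 h2
    apply step k h1 h2
    by_contra ht
    push_neg at ht
    have hkn : k < n' := by omega
    have hdn := hd k (by omega) hkn
    have h4 := hnn k h1 h2
    rw [show F k - F (k+1) = -(F (k+1) - F k) by ring,
      hF k (Finset.mem_Ico.mpr ⟨by omega, hkn⟩)] at h4
    have hnum : 2 * q m - q (k+1) - q k ≤ 0 := by
      by_contra h
      push_neg at h
      have := div_pos h hdn
      linarith
    have h5 : q m < q (k+1) := by
      have := hq k (Finset.mem_Ico.mpr ⟨by omega, hkn⟩)
      nlinarith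
    have hkm : k < m := by
      by_contra h
      push_neg at h
      have := qmono n' q hq m k hm1 h (by omega)
      linarith
    have := qmono n' q hq (k+1) m (by omega) hkm hm2
    linarith
  have htel : ∑ k ∈ Finset.Ico a c, (F k - F (k+1)) = F a - F c := by
    have h1 : ∑ k ∈ Finset.Ico a c, (F k - F (k+1))
        = -∑ k ∈ Finset.Ico a c, (F (k+1) - F k) := by
      rw [← Finset.sum_neg_distrib]
      exact Finset.sum_congr rfl fun k _ => by ring
    rw [h1, telescope F hac.le]
    ring
  have hsplit := Finset.sum_eq_sum_Ico_succ_bot hac (fun k => F k - F (k+1))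
  have hsum1 : ((c:ℝ) - (a+1)) ≤ ∑ k ∈ Finset.Ico (a+1) c, (F k - F (k+1)) := by
    calc ((c:ℝ) - (a+1)) = ∑ _k ∈ Finset.Ico (a+1) c, (1:ℝ) := by
          rw [Finset.sum_const, nsmul_eq_mul, mul_one, Nat.card_Ico,
            Nat.cast_sub (by omega)]
          push_cast
          ring
    _ ≤ _ := Finset.sum_le_sum (fun k hk => by
          have := Finset.mem_Ico.mp hk
          exact hge1 k (by omega) (by omega))
  have hfirst : 0 ≤ F a - F (a+1) := hnn a le_rfl hac
  constructor
  · linarith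
  · intro hlm'
    have h7 : 1 ≤ F a - F (a+1) := hlm hlm' a le_rfl hac
    linarith

/- STATEMENT 16: In the generalized (landmark) bichromatic scheme,
Δ_i(j) ≥ max(|φ(i) − φ(j)| − 1, 0)/M, and if p_i equals some landmark p'_k then
Δ_i(j) ≥ |φ(i) − φ(j)|/M. -/
theorem stmt_16
    (n' n : ℕ) (hn' : 10 ≤ n') (hn : 2 ≤ n)
    (p' : ℕ → ℝ)
    (hp'0 : 0 ≤ p' 1) (hp'1 : p' n' ≤ 1)
    (hp'mono : ∀ k ∈ Finset.Ico 1 n', p' k < p' (k + 1))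
    (p : ℕ → ℝ)
    (hp01 : ∀ i ∈ Finset.Icc 1 n, 0 ≤ p i ∧ p i ≤ 1)
    (hpmono : ∀ i ∈ Finset.Ico 1 n, p i ≤ p (i + 1))
    (b r : ℕ → ℝ)
    (hb : ∀ k, b k = ∑ ℓ ∈ Finset.Ico 1 k, (2 - (p' (ℓ + 1) + p' ℓ)) / (p' (ℓ + 1) - p' ℓ))
    (hr : ∀ k, r k = ∑ ℓ ∈ Finset.Ico k n', (p' (ℓ + 1) + p' ℓ) / (p' (ℓ + 1) - p' ℓ))
    (φ : ℕ → ℕ)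
    (hφmem : ∀ i ∈ Finset.Icc 1 n, φ i ∈ Finset.Icc 1 n')
    (hφmax : ∀ i ∈ Finset.Icc 1 n, ∀ k ∈ Finset.Icc 1 n',
        p i * b k + (1 - p i) * r k ≤ p i * b (φ i) + (1 - p i) * r (φ i))
    (R B M : ℝ)
    (hR : R = ∑ k ∈ Finset.Icc 1 n',
        ((((Finset.Icc 1 n).filter (fun i => φ i = k)).card : ℝ) + 1) * r k)
    (hB : B = ∑ k ∈ Finset.Icc 1 n',
        ((((Finset.Icc 1 n).filter (fun i => φ i = k)).card : ℝ) + 1) * b k)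
    (hM : M = max R B)
    (Rv Bv : ℕ → ℝ)
    (hRv : ∀ j, Rv j = (r (φ j) + (M - R) / n) / M)
    (hBv : ∀ j, Bv j = (b (φ j) + (M - B) / n) / M)
    (E : ℕ → ℕ → ℝ)
    (hE : ∀ i j, E i j = p i * Bv j + (1 - p i) * Rv j) :
    ∀ i ∈ Finset.Icc 1 n, ∀ j ∈ Finset.Icc 1 n,
      max (|(φ i : ℝ) - (φ j : ℝ)| - 1) 0 / M ≤ E i i - E i j ∧
      ((∃ k ∈ Finset.Icc 1 n', p i = p' k) →
        |(φ i : ℝ) - (φ j : ℝ)| / M ≤ E i i - E i j) := by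
  -- positivity of M
  have hqle := qmono n' p' hp'mono
  have hbnn : ∀ k, k ≤ n' → 0 ≤ b k := by
    intro k hk
    rw [hb]
    apply Finset.sum_nonneg
    intro ℓ hℓ
    obtain ⟨h1, h2⟩ := Finset.mem_Ico.mp hℓ
    have hd : 0 < p' (ℓ+1) - p' ℓ :=
      sub_pos.mpr (hp'mono ℓ (Finset.mem_Ico.mpr ⟨h1, by omega⟩))
    have hA : p' (ℓ+1) ≤ 1 := le_trans (hqle (ℓ+1) n' (by omega) (by omega) le_rfl) hp'1
    exact div_nonneg (by linarith) hd.le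
  have hbpos : 0 < b n' := by
    rw [hb]
    apply Finset.sum_pos'
    · intro ℓ hℓ
      obtain ⟨h1, h2⟩ := Finset.mem_Ico.mp hℓ
      have hd : 0 < p' (ℓ+1) - p' ℓ :=
        sub_pos.mpr (hp'mono ℓ (Finset.mem_Ico.mpr ⟨h1, by omega⟩))
      have hA : p' (ℓ+1) ≤ 1 := le_trans (hqle (ℓ+1) n' (by omega) (by omega) le_rfl) hp'1
      exact div_nonneg (by linarith) hd.le
    · refine ⟨1, Finset.mem_Ico.mpr ⟨le_rfl, by omega⟩, ?_⟩
      have hd : 0 < p' (1+1) - p' 1 :=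
        sub_pos.mpr (hp'mono 1 (Finset.mem_Ico.mpr ⟨le_rfl, by omega⟩))
      have hA : p' (1+1) ≤ 1 := le_trans (hqle (1+1) n' (by omega) (by omega) le_rfl) hp'1
      exact div_pos (by linarith) hd
  have hBpos : 0 < B := by
    rw [hB]
    apply Finset.sum_pos'
    · intro k hk
      obtain ⟨h1, h2⟩ := Finset.mem_Icc.mp hk
      exact mul_nonneg (by positivity) (hbnn k h2)
    · exact ⟨n', Finset.mem_Icc.mpr ⟨by omega, le_rfl⟩,
        mul_pos (by positivity) hbpos⟩
  have hMpos : 0 < M := by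
    rw [hM]
    exact lt_of_lt_of_le hBpos (le_max_right R B)
  have hM0 : M ≠ 0 := ne_of_gt hMpos
  have hn0 : (n:ℝ) ≠ 0 := Nat.cast_ne_zero.mpr (by omega)
  intro i hi j hj
  obtain ⟨hφi1, hφi2⟩ := Finset.mem_Icc.mp (hφmem i hi)
  obtain ⟨hφj1, hφj2⟩ := Finset.mem_Icc.mp (hφmem j hj)
  -- the value function and its increments
  have hFinc : ∀ k ∈ Finset.Ico 1 n',
      (p i * b (k+1) + (1 - p i) * r (k+1)) - (p i * b k + (1 - p i) * r k)
        = (2 * p i - p' (k+1) - p' k) / (p' (k+1) - p' k) := by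
    intro k hk
    obtain ⟨h1, h2⟩ := Finset.mem_Ico.mp hk
    have hd : 0 < p' (k+1) - p' k := sub_pos.mpr (hp'mono k hk)
    have hb' : b (k+1) = b k + (2 - (p' (k+1) + p' k)) / (p' (k+1) - p' k) := by
      rw [hb, hb, Finset.sum_Ico_succ_top h1]
    have hr' : r k = (p' (k+1) + p' k) / (p' (k+1) - p' k) + r (k+1) := by
      rw [hr (k+1), hr k, Finset.sum_eq_sum_Ico_succ_bot h2]
    rw [hb', hr']
    field_simp
    ring
  have hmaxF : ∀ k ∈ Finset.Icc 1 n',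
      p i * b k + (1 - p i) * r k ≤ p i * b (φ i) + (1 - p i) * r (φ i) :=
    hφmax i hi
  have hΔ : E i i - E i j =
      ((p i * b (φ i) + (1 - p i) * r (φ i)) - (p i * b (φ j) + (1 - p i) * r (φ j))) / M := by
    rw [hE i i, hE i j, hBv i, hBv j, hRv i, hRv j]
    field_simp
    ring
  have hnnFa : 0 ≤ (p i * b (φ i) + (1 - p i) * r (φ i))
      - (p i * b (φ j) + (1 - p i) * r (φ j)) :=
    sub_nonneg.mpr (hmaxF (φ j) (Finset.mem_Icc.mpr ⟨hφj1, hφj2⟩))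
  have key : (max (|(φ i : ℝ) - (φ j : ℝ)| - 1) 0 ≤
        (p i * b (φ i) + (1 - p i) * r (φ i)) - (p i * b (φ j) + (1 - p i) * r (φ j))) ∧
      ((∃ k ∈ Finset.Icc 1 n', p i = p' k) →
        |(φ i : ℝ) - (φ j : ℝ)| ≤
          (p i * b (φ i) + (1 - p i) * r (φ i)) - (p i * b (φ j) + (1 - p i) * r (φ j))) := by
    rcases lt_trichotomy (φ j) (φ i) with h | h | h
    · have habs : |(φ i : ℝ) - (φ j : ℝ)| = (φ i : ℝ) - (φ j : ℝ) := by
        rw [abs_of_nonneg]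
        have : (φ j : ℝ) < (φ i : ℝ) := by exact_mod_cast h
        linarith
      obtain ⟨k1, k2⟩ := aux_lt n' p' hp'mono (p i)
        (fun k => p i * b k + (1 - p i) * r k) hFinc (φ i) (φ j) hφi2 hφj1 hmaxF h
      refine ⟨?_, ?_⟩
      · rw [habs]
        exact max_le (by linarith) hnnFa
      · rintro ⟨m, hm, hpm⟩
        obtain ⟨hm1, hm2⟩ := Finset.mem_Icc.mp hm
        rw [habs]
        exact k2 ⟨m, hm1, hm2, hpm⟩
    · have habs : |(φ i : ℝ) - (φ j : ℝ)| = 0 := by rw [h, sub_self, abs_zero]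
      rw [habs]
      exact ⟨max_le (by linarith) hnnFa, fun _ => hnnFa⟩
    · have habs : |(φ i : ℝ) - (φ j : ℝ)| = (φ j : ℝ) - (φ i : ℝ) := by
        rw [abs_of_nonpos, neg_sub]
        have : (φ i : ℝ) < (φ j : ℝ) := by exact_mod_cast h
        linarith
      obtain ⟨k1, k2⟩ := aux_gt n' p' hp'mono (p i)
        (fun k => p i * b k + (1 - p i) * r k) hFinc (φ i) (φ j) hφi1 hφj2 hmaxF h
      refine ⟨?_, ?_⟩
      · rw [habs]
        exact max_le (by linarith) hnnFa
      · rintro ⟨m, hm, hpm⟩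
        obtain ⟨hm1, hm2⟩ := Finset.mem_Icc.mp hm
        rw [habs]
        exact k2 ⟨m, hm1, hm2, hpm⟩
  rw [hΔ]
  exact ⟨(div_le_div_iff_of_pos_right hMpos).mpr key.1,
    fun hex => (div_le_div_iff_of_pos_right hMpos).mpr (key.2 hex)⟩
end

section
/- For every urn i ∈ {1,…,n}, E_i(i) ≤ 2(n'−1)/(ε·M) + 1/n. -/
/-! Both weight vectors `b` and `r` are sums of at most `n' - 1` terms `a / (p'_{ℓ+1} - p'_ℓ)`
with `0 ≤ a ≤ 2` and gap at least `ε`, so they lie in `[0, 2(n'-1)/ε]`. Hence the "own urn"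
part `(p_i b_{φ(i)} + (1-p_i) r_{φ(i)}) / M` is at most `2(n'-1)/(εM)`, and since
`0 ≤ R, B ≤ M` the padding part `(p_i(M-B) + (1-p_i)(M-R)) / (nM)` is at most `1/n`. -/

open Finset

lemma sum_div_mem_Icc_of_subset {ι : Type*} {s t : Finset ι} {a d : ι → ℝ} {c ε : ℝ}
    (hst : s ⊆ t) (hε : 0 < ε) (hd : ∀ i ∈ t, ε ≤ d i) (ha : ∀ i ∈ t, a i ∈ Set.Icc 0 c) :
    ∑ i ∈ s, a i / d i ∈ Set.Icc 0 (#t * c / ε) := by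
  have hterm : ∀ i ∈ t, a i / d i ∈ Set.Icc 0 (c / ε) := fun i hi =>
    ⟨div_nonneg (ha i hi).1 (hε.le.trans (hd i hi)),
      div_le_div₀ ((ha i hi).1.trans (ha i hi).2) (ha i hi).2 hε (hd i hi)⟩
  refine ⟨sum_nonneg fun i hi => (hterm i (hst hi)).1, ?_⟩
  calc ∑ i ∈ s, a i / d i ≤ ∑ i ∈ t, a i / d i :=
        sum_le_sum_of_subset_of_nonneg hst fun i hi _ => (hterm i hi).1
    _ ≤ #t • (c / ε) := sum_le_card_nsmul t _ _ fun i hi => (hterm i hi).2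
    _ = #t * c / ε := by rw [nsmul_eq_mul, mul_div_assoc]

section Landmarks

variable {p' : ℕ → ℝ} {n' : ℕ} {ε : ℝ}

lemma landmark_mem_unitInterval (hp'0 : 0 ≤ p' 1) (hp'1 : p' n' ≤ 1)
    (hp'mono : ∀ k ∈ Ico 1 n', p' k < p' (k + 1)) {k : ℕ} (hk : k ∈ Set.Icc 1 n') :
    p' k ∈ Set.Icc 0 1 := by
  have hmono : MonotoneOn p' (Set.Icc 1 n') :=
    monotoneOn_of_le_succ Set.ordConnected_Icc fun a _ ha hsa => by
      rw [Order.succ_eq_add_one] at hsa ⊢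
      exact (hp'mono a (mem_Ico.2 ⟨ha.1, hsa.2⟩)).le
  have hn' : 1 ≤ n' := hk.1.trans hk.2
  exact ⟨hp'0.trans (hmono ⟨le_rfl, hn'⟩ hk hk.1), (hmono hk ⟨hn', le_rfl⟩ hk.2).trans hp'1⟩

lemma sum_div_landmark_gap_mem_Icc (hp'mono : ∀ k ∈ Ico 1 n', p' k < p' (k + 1))
    (hε : IsLeast {x : ℝ | ∃ k, 1 ≤ k ∧ k < n' ∧ x = p' (k + 1) - p' k} ε)
    {a : ℕ → ℝ} (ha : ∀ ℓ ∈ Ico 1 n', a ℓ ∈ Set.Icc 0 2)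
    {s : Finset ℕ} (hs : s ⊆ Ico 1 n') :
    ∑ ℓ ∈ s, a ℓ / (p' (ℓ + 1) - p' ℓ) ∈ Set.Icc 0 (2 * ((n' : ℝ) - 1) / ε) := by
  obtain ⟨⟨k₀, hk₀, hk₀n', hεk₀⟩, hεle⟩ := hε
  have hεpos : 0 < ε := by
    rw [hεk₀]
    exact sub_pos.2 (hp'mono k₀ (mem_Ico.2 ⟨hk₀, hk₀n'⟩))
  have hgap : ∀ ℓ ∈ Ico 1 n', ε ≤ p' (ℓ + 1) - p' ℓ := fun ℓ hℓ =>
    hεle ⟨ℓ, (mem_Ico.1 hℓ).1, (mem_Ico.1 hℓ).2, rfl⟩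
  have hcard : ((#(Ico 1 n') : ℕ) : ℝ) = (n' : ℝ) - 1 := by
    rw [Nat.card_Ico, Nat.cast_sub (by omega), Nat.cast_one]
  simpa only [hcard, mul_comm] using sum_div_mem_Icc_of_subset hs hεpos hgap ha

end Landmarks

lemma expectation_le_of_weights_le {p b r B R M X : ℝ} (n : ℕ) (hp : p ∈ Set.Icc 0 1)
    (hb : b ≤ X) (hr : r ≤ X) (hB : 0 ≤ B) (hR : 0 ≤ R) (hM : 0 ≤ M) :
    p * ((b + (M - B) / n) / M) + (1 - p) * ((r + (M - R) / n) / M) ≤ X / M + 1 / n := by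
  obtain ⟨hp0, hp1⟩ := hp
  have hsplit : p * ((b + (M - B) / n) / M) + (1 - p) * ((r + (M - R) / n) / M)
      = (p * b + (1 - p) * r) / M + (p * (M - B) + (1 - p) * (M - R)) / M / n := by ring
  have hown : p * b + (1 - p) * r ≤ X := by nlinarith
  have hpad : p * (M - B) + (1 - p) * (M - R) ≤ M := by nlinarith
  rw [hsplit]
  gcongr
  exact div_le_one_of_le₀ hpad hM

theorem stmt_17_general
    (n' n : ℕ)
    (p' : ℕ → ℝ)
    (hp'0 : 0 ≤ p' 1) (hp'1 : p' n' ≤ 1)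
    (hp'mono : ∀ k ∈ Finset.Ico 1 n', p' k < p' (k + 1))
    (ε : ℝ)
    (hε : IsLeast {x : ℝ | ∃ k, 1 ≤ k ∧ k < n' ∧ x = p' (k + 1) - p' k} ε)
    (p : ℕ → ℝ)
    (hp01 : ∀ i ∈ Finset.Icc 1 n, 0 ≤ p i ∧ p i ≤ 1)
    (b r : ℕ → ℝ)
    (hb : ∀ k, b k = ∑ ℓ ∈ Finset.Ico 1 k, (2 - (p' (ℓ + 1) + p' ℓ)) / (p' (ℓ + 1) - p' ℓ))
    (hr : ∀ k, r k = ∑ ℓ ∈ Finset.Ico k n', (p' (ℓ + 1) + p' ℓ) / (p' (ℓ + 1) - p' ℓ))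
    (φ : ℕ → ℕ)
    (hφmem : ∀ i ∈ Finset.Icc 1 n, φ i ∈ Finset.Icc 1 n')
    (R B M : ℝ)
    (hR : R = ∑ k ∈ Finset.Icc 1 n',
        ((((Finset.Icc 1 n).filter (fun i => φ i = k)).card : ℝ) + 1) * r k)
    (hB : B = ∑ k ∈ Finset.Icc 1 n',
        ((((Finset.Icc 1 n).filter (fun i => φ i = k)).card : ℝ) + 1) * b k)
    (hM : M = max R B)
    (Rv Bv : ℕ → ℝ)
    (hRv : ∀ j, Rv j = (r (φ j) + (M - R) / n) / M)
    (hBv : ∀ j, Bv j = (b (φ j) + (M - B) / n) / M)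
    (E : ℕ → ℕ → ℝ)
    (hE : ∀ i j, E i j = p i * Bv j + (1 - p i) * Rv j) :
    ∀ i ∈ Finset.Icc 1 n, E i i ≤ 2 * ((n' : ℝ) - 1) / (ε * M) + 1 / n := by
  have hpair : ∀ ℓ ∈ Ico 1 n', p' (ℓ + 1) + p' ℓ ∈ Set.Icc 0 2 := fun ℓ hℓ => by
    obtain ⟨hℓ1, hℓn'⟩ := mem_Ico.1 hℓ
    have h₁ := landmark_mem_unitInterval hp'0 hp'1 hp'mono ⟨hℓ1.trans ℓ.le_succ, hℓn'⟩
    have h₀ := landmark_mem_unitInterval hp'0 hp'1 hp'mono ⟨hℓ1, hℓn'.le⟩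
    exact ⟨by linarith [h₀.1, h₁.1], by linarith [h₀.2, h₁.2]⟩
  have hbk : ∀ k ∈ Icc 1 n', b k ∈ Set.Icc 0 (2 * ((n' : ℝ) - 1) / ε) := fun k hk =>
    hb k ▸ sum_div_landmark_gap_mem_Icc hp'mono hε
      (fun ℓ hℓ => ⟨by linarith [(hpair ℓ hℓ).2], by linarith [(hpair ℓ hℓ).1]⟩)
      (Ico_subset_Ico_right (mem_Icc.1 hk).2)
  have hrk : ∀ k ∈ Icc 1 n', r k ∈ Set.Icc 0 (2 * ((n' : ℝ) - 1) / ε) := fun k hk =>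
    hr k ▸ sum_div_landmark_gap_mem_Icc hp'mono hε hpair
      (Ico_subset_Ico_left (mem_Icc.1 hk).1)
  have hB0 : 0 ≤ B := hB ▸ sum_nonneg fun k hk => mul_nonneg (by positivity) (hbk k hk).1
  have hR0 : 0 ≤ R := hR ▸ sum_nonneg fun k hk => mul_nonneg (by positivity) (hrk k hk).1
  intro i hi
  rw [hE, hBv, hRv, ← div_div]
  exact expectation_le_of_weights_le n (hp01 i hi) (hbk _ (hφmem i hi)).2
    (hrk _ (hφmem i hi)).2 hB0 hR0
    (hR0.trans (hM ▸ le_max_left R B))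

theorem stmt_17
    (n' n : ℕ) (hn' : 10 ≤ n') (hn : 2 ≤ n)
    (p' : ℕ → ℝ)
    (hp'0 : 0 ≤ p' 1) (hp'1 : p' n' ≤ 1)
    (hp'mono : ∀ k ∈ Finset.Ico 1 n', p' k < p' (k + 1))
    (ε : ℝ)
    (hε : IsLeast {x : ℝ | ∃ k, 1 ≤ k ∧ k < n' ∧ x = p' (k + 1) - p' k} ε)
    (p : ℕ → ℝ)
    (hp01 : ∀ i ∈ Finset.Icc 1 n, 0 ≤ p i ∧ p i ≤ 1)
    (hpmono : ∀ i ∈ Finset.Ico 1 n, p i ≤ p (i + 1))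
    (b r : ℕ → ℝ)
    (hb : ∀ k, b k = ∑ ℓ ∈ Finset.Ico 1 k, (2 - (p' (ℓ + 1) + p' ℓ)) / (p' (ℓ + 1) - p' ℓ))
    (hr : ∀ k, r k = ∑ ℓ ∈ Finset.Ico k n', (p' (ℓ + 1) + p' ℓ) / (p' (ℓ + 1) - p' ℓ))
    (φ : ℕ → ℕ)
    (hφmem : ∀ i ∈ Finset.Icc 1 n, φ i ∈ Finset.Icc 1 n')
    (hφmax : ∀ i ∈ Finset.Icc 1 n, ∀ k ∈ Finset.Icc 1 n',
        p i * b k + (1 - p i) * r k ≤ p i * b (φ i) + (1 - p i) * r (φ i))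
    (R B M : ℝ)
    (hR : R = ∑ k ∈ Finset.Icc 1 n',
        ((((Finset.Icc 1 n).filter (fun i => φ i = k)).card : ℝ) + 1) * r k)
    (hB : B = ∑ k ∈ Finset.Icc 1 n',
        ((((Finset.Icc 1 n).filter (fun i => φ i = k)).card : ℝ) + 1) * b k)
    (hM : M = max R B)
    (Rv Bv : ℕ → ℝ)
    (hRv : ∀ j, Rv j = (r (φ j) + (M - R) / n) / M)
    (hBv : ∀ j, Bv j = (b (φ j) + (M - B) / n) / M)
    (E : ℕ → ℕ → ℝ)
    (hE : ∀ i j, E i j = p i * Bv j + (1 - p i) * Rv j) :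
    ∀ i ∈ Finset.Icc 1 n, E i i ≤ 2 * ((n' : ℝ) - 1) / (ε * M) + 1 / n :=
  stmt_17_general n' n p' hp'0 hp'1 hp'mono ε hε p hp01 b r hb hr φ hφmem R B M hR hB hM Rv Bv hRv
    hBv E hE
end

section
/- Suppose in addition that, with K = ⌈(n'−1)/3⌉, the landmarks satisfy: (a) for every 1 ≤ k ≤ K, p'_{k+1} − p'_k ≤ 2ε and p'_{n'−k+1} − p'_{n'−k} ≤ 2ε; and (b) p'_{K+1} ≤ (2K+1)·ε and p'_{n'−K} ≥ 1 − (2K+1)·ε. Then (1/81)·(n'−1)·(n+n')/ε ≤ M ≤ 2·(n'−1)·(n+n')/ε. -/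
/-!
Every summand of `r_k` and `b_k` has a numerator in `[0, 2]` and a gap `≥ ε` as denominator, so
`r_k, b_k ≤ 2 (n' - 1) / ε`, while the weights `|φ⁻¹(k)| + 1` add up to `n + n'`.
Conversely, the `K` gaps at either end are at most `2ε` and their landmarks lie within
`(2K + 1) ε` of `0` (resp. `1`), so each of these left blue (resp. right red) summands is at least
`C / ε` with `C = 1 - (2K + 1) ε`. Every `k` has one of the two end blocks in its range, whence
`r_k + b_k ≥ K C / ε ≥ 2 (n' - 1) / (81 ε)`, and `M ≥ (R + B) / 2`.
-/

open Finset

structure LandmarkSpacing (N : ℕ) (p' : ℕ → ℝ) (ε : ℝ) : Prop where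
  pos : 0 < ε
  le_gap : ∀ ℓ, 1 ≤ ℓ → ℓ < N → ε ≤ p' (ℓ + 1) - p' ℓ
  first_nonneg : 0 ≤ p' 1
  last_le_one : p' N ≤ 1

noncomputable def redWeight (p' : ℕ → ℝ) (ℓ : ℕ) : ℝ :=
  (p' (ℓ + 1) + p' ℓ) / (p' (ℓ + 1) - p' ℓ)

noncomputable def blueWeight (p' : ℕ → ℝ) (ℓ : ℕ) : ℝ :=
  (2 - (p' (ℓ + 1) + p' ℓ)) / (p' (ℓ + 1) - p' ℓ)

-- `blueSum p' k` and `redSum N p' k` are the `b_k` and `r_k` of the statement, with `N = n'`.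
noncomputable def redSum (N : ℕ) (p' : ℕ → ℝ) (k : ℕ) : ℝ := ∑ ℓ ∈ Ico k N, redWeight p' ℓ

noncomputable def blueSum (p' : ℕ → ℝ) (k : ℕ) : ℝ := ∑ ℓ ∈ Ico 1 k, blueWeight p' ℓ

theorem sum_le_card_mul_of_subset {ι : Type*} {s t : Finset ι} {f : ι → ℝ} {m : ℝ} (hst : s ⊆ t)
    (hf : ∀ ℓ ∈ t, f ℓ ∈ Set.Icc 0 m) : ∑ ℓ ∈ s, f ℓ ≤ #t * m := by
  calc ∑ ℓ ∈ s, f ℓ ≤ ∑ ℓ ∈ t, f ℓ :=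
        sum_le_sum_of_subset_of_nonneg hst fun ℓ hℓ _ => (hf ℓ hℓ).1
    _ ≤ #t * m := by simpa using sum_le_card_nsmul t f m fun ℓ hℓ => (hf ℓ hℓ).2

theorem card_mul_le_sum_of_subset {ι : Type*} {s t : Finset ι} {f : ι → ℝ} {m : ℝ} (hst : s ⊆ t)
    (hnonneg : ∀ ℓ ∈ t, 0 ≤ f ℓ) (hm : ∀ ℓ ∈ s, m ≤ f ℓ) : #s * m ≤ ∑ ℓ ∈ t, f ℓ := by
  calc #s * m ≤ ∑ ℓ ∈ s, f ℓ := by simpa using card_nsmul_le_sum s f m hm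
    _ ≤ ∑ ℓ ∈ t, f ℓ := sum_le_sum_of_subset_of_nonneg hst fun ℓ hℓ _ => hnonneg ℓ hℓ

theorem div_le_div_of_two_mul_le {C ε s d : ℝ} (hC : 0 ≤ C) (hs : 2 * C ≤ s) (hd : 0 < d)
    (hdε : d ≤ 2 * ε) : C / ε ≤ s / d := by
  calc C / ε = 2 * C / (2 * ε) := (mul_div_mul_left C ε two_ne_zero).symm
    _ ≤ s / d := div_le_div₀ (hC.trans (by linarith)) hs hd hdε

theorem div_mem_Icc_two_div {s d ε : ℝ} (hs : s ∈ Set.Icc 0 2) (hε : 0 < ε) (hd : ε ≤ d) :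
    s / d ∈ Set.Icc 0 (2 / ε) :=
  ⟨div_nonneg hs.1 (hε.le.trans hd), div_le_div₀ zero_le_two hs.2 hε hd⟩

namespace LandmarkSpacing

variable {N : ℕ} {p' : ℕ → ℝ} {ε : ℝ}

theorem of_isLeast (hp'0 : 0 ≤ p' 1) (hp'1 : p' N ≤ 1)
    (hmono : ∀ k ∈ Ico 1 N, p' k < p' (k + 1))
    (hε : IsLeast {x : ℝ | ∃ k, 1 ≤ k ∧ k < N ∧ x = p' (k + 1) - p' k} ε) :
    LandmarkSpacing N p' ε := by
  obtain ⟨⟨k, hk1, hkN, rfl⟩, hle⟩ := hε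
  exact ⟨sub_pos.2 (hmono k (mem_Ico.2 ⟨hk1, hkN⟩)), fun ℓ h1 h2 => hle ⟨ℓ, h1, h2, rfl⟩,
    hp'0, hp'1⟩

theorem gap_pos (h : LandmarkSpacing N p' ε) {ℓ : ℕ} (h1 : 1 ≤ ℓ) (h2 : ℓ < N) :
    0 < p' (ℓ + 1) - p' ℓ :=
  h.pos.trans_le (h.le_gap ℓ h1 h2)

theorem monotoneOn (h : LandmarkSpacing N p' ε) : MonotoneOn p' (Set.Icc 1 N) :=
  monotoneOn_of_le_succ Set.ordConnected_Icc fun a _ ha hsa => by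
    rw [Order.succ_eq_add_one] at hsa ⊢
    linarith [h.gap_pos ha.1 (by simp at hsa; omega)]

theorem nonneg (h : LandmarkSpacing N p' ε) {ℓ : ℕ} (h1 : 1 ≤ ℓ) (h2 : ℓ ≤ N) : 0 ≤ p' ℓ :=
  h.first_nonneg.trans (h.monotoneOn ⟨le_rfl, h1.trans h2⟩ ⟨h1, h2⟩ h1)

theorem le_one (h : LandmarkSpacing N p' ε) {ℓ : ℕ} (h1 : 1 ≤ ℓ) (h2 : ℓ ≤ N) : p' ℓ ≤ 1 :=
  (h.monotoneOn ⟨h1, h2⟩ ⟨h1.trans h2, le_rfl⟩ h2).trans h.last_le_one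

theorem sub_one_mul_le_one (h : LandmarkSpacing N p' ε) (hN : 1 ≤ N) : ((N : ℝ) - 1) * ε ≤ 1 := by
  have hsum : #(Ico 1 N) • ε ≤ ∑ ℓ ∈ Ico 1 N, (p' (ℓ + 1) - p' ℓ) :=
    card_nsmul_le_sum _ _ _ fun ℓ hℓ => h.le_gap ℓ (mem_Ico.1 hℓ).1 (mem_Ico.1 hℓ).2
  rw [sum_Ico_sub _ hN, Nat.card_Ico, nsmul_eq_mul, Nat.cast_sub hN, Nat.cast_one] at hsum
  linarith [h.first_nonneg, h.last_le_one]

theorem add_mem_Icc (h : LandmarkSpacing N p' ε) {ℓ : ℕ} (h1 : 1 ≤ ℓ) (h2 : ℓ < N) :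
    p' (ℓ + 1) + p' ℓ ∈ Set.Icc 0 2 := by
  have := h.nonneg h1 h2.le
  have := h.le_one h1 h2.le
  have := h.nonneg (by omega : 1 ≤ ℓ + 1) h2
  have := h.le_one (by omega : 1 ≤ ℓ + 1) h2
  constructor <;> linarith

theorem redWeight_mem_Icc (h : LandmarkSpacing N p' ε) {ℓ : ℕ} (h1 : 1 ≤ ℓ) (h2 : ℓ < N) :
    redWeight p' ℓ ∈ Set.Icc 0 (2 / ε) :=
  div_mem_Icc_two_div (h.add_mem_Icc h1 h2) h.pos (h.le_gap ℓ h1 h2)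

theorem blueWeight_mem_Icc (h : LandmarkSpacing N p' ε) {ℓ : ℕ} (h1 : 1 ≤ ℓ) (h2 : ℓ < N) :
    blueWeight p' ℓ ∈ Set.Icc 0 (2 / ε) := by
  have hs := h.add_mem_Icc h1 h2
  exact div_mem_Icc_two_div ⟨by linarith [hs.2], by linarith [hs.1]⟩ h.pos (h.le_gap ℓ h1 h2)

theorem redSum_le (h : LandmarkSpacing N p' ε) {k : ℕ} (hk : 1 ≤ k) (hN : 1 ≤ N) :
    redSum N p' k ≤ ((N : ℝ) - 1) * (2 / ε) := by
  have := sum_le_card_mul_of_subset (Ico_subset_Ico_left hk) fun ℓ hℓ =>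
    h.redWeight_mem_Icc (mem_Ico.1 hℓ).1 (mem_Ico.1 hℓ).2
  rwa [Nat.card_Ico, Nat.cast_sub hN, Nat.cast_one] at this

theorem blueSum_le (h : LandmarkSpacing N p' ε) {k : ℕ} (hk : k ≤ N) (hN : 1 ≤ N) :
    blueSum p' k ≤ ((N : ℝ) - 1) * (2 / ε) := by
  have := sum_le_card_mul_of_subset (Ico_subset_Ico_right hk) fun ℓ hℓ =>
    h.blueWeight_mem_Icc (mem_Ico.1 hℓ).1 (mem_Ico.1 hℓ).2
  rwa [Nat.card_Ico, Nat.cast_sub hN, Nat.cast_one] at this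

theorem div_le_blueWeight (h : LandmarkSpacing N p' ε) {K ℓ : ℕ} {δ : ℝ} (hKN : K < N)
    (hδ : δ ≤ 1) (hedge : p' (K + 1) ≤ δ) (h1 : 1 ≤ ℓ) (hℓK : ℓ ≤ K)
    (hgap : p' (ℓ + 1) - p' ℓ ≤ 2 * ε) : (1 - δ) / ε ≤ blueWeight p' ℓ := by
  have hle : p' (ℓ + 1) ≤ p' (K + 1) :=
    h.monotoneOn ⟨by omega, by omega⟩ ⟨by omega, by omega⟩ (by omega)
  have hpos := h.gap_pos h1 (by omega)
  exact div_le_div_of_two_mul_le (by linarith) (by linarith) hpos hgap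

theorem div_le_redWeight (h : LandmarkSpacing N p' ε) {K ℓ : ℕ} {δ : ℝ} (hKN : K < N)
    (hδ : δ ≤ 1) (hedge : 1 - δ ≤ p' (N - K)) (hKℓ : N - K ≤ ℓ) (hℓN : ℓ < N)
    (hgap : p' (ℓ + 1) - p' ℓ ≤ 2 * ε) : (1 - δ) / ε ≤ redWeight p' ℓ := by
  have hle : p' (N - K) ≤ p' ℓ := h.monotoneOn ⟨by omega, by omega⟩ ⟨by omega, by omega⟩ hKℓ
  have hpos := h.gap_pos (by omega) hℓN
  exact div_le_div_of_two_mul_le (by linarith) (by linarith) hpos hgap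

theorem blueSum_nonneg (h : LandmarkSpacing N p' ε) {k : ℕ} (hk : k ≤ N) : 0 ≤ blueSum p' k :=
  sum_nonneg fun ℓ hℓ => (h.blueWeight_mem_Icc (mem_Ico.1 hℓ).1 (by grind)).1

theorem redSum_nonneg (h : LandmarkSpacing N p' ε) {k : ℕ} (hk : 1 ≤ k) : 0 ≤ redSum N p' k :=
  sum_nonneg fun ℓ hℓ => (h.redWeight_mem_Icc (by grind) (mem_Ico.1 hℓ).2).1

theorem le_redSum_add_blueSum (h : LandmarkSpacing N p' ε) {K k : ℕ} {δ : ℝ} (hK : 2 * K ≤ N)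
    (hδ : δ ≤ 1) (hleft : p' (K + 1) ≤ δ) (hright : 1 - δ ≤ p' (N - K))
    (hgaps : ∀ j, 1 ≤ j → j ≤ K →
      p' (j + 1) - p' j ≤ 2 * ε ∧ p' (N - j + 1) - p' (N - j) ≤ 2 * ε)
    (hk1 : 1 ≤ k) (hkN : k ≤ N) :
    K * ((1 - δ) / ε) ≤ redSum N p' k + blueSum p' k := by
  have hKN : K < N := by omega
  rcases le_or_gt k K with hkK | hKk
  · have hred : #(Ico (N - K) N) * ((1 - δ) / ε) ≤ redSum N p' k :=
      card_mul_le_sum_of_subset (Ico_subset_Ico_left (by omega))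
        (fun ℓ hℓ => (h.redWeight_mem_Icc (by grind) (mem_Ico.1 hℓ).2).1)
        fun ℓ hℓ => by
          obtain ⟨hKℓ, hℓN⟩ := mem_Ico.1 hℓ
          have hgap := (hgaps (N - ℓ) (by omega) (by omega)).2
          rw [Nat.sub_sub_self hℓN.le] at hgap
          exact h.div_le_redWeight hKN hδ hright hKℓ hℓN hgap
    rw [Nat.card_Ico, Nat.sub_sub_self hKN.le] at hred
    linarith [h.blueSum_nonneg hkN]
  · have hblue : #(Ico 1 (K + 1)) * ((1 - δ) / ε) ≤ blueSum p' k :=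
      card_mul_le_sum_of_subset (Ico_subset_Ico_right (by omega))
        (fun ℓ hℓ => (h.blueWeight_mem_Icc (mem_Ico.1 hℓ).1 (by grind)).1)
        fun ℓ hℓ => by
          obtain ⟨h1, hℓK⟩ := mem_Ico.1 hℓ
          exact h.div_le_blueWeight hKN hδ hleft h1 (by omega)
            (hgaps ℓ h1 (by omega)).1
    rw [Nat.card_Ico, Nat.add_sub_cancel] at hblue
    linarith [h.redSum_nonneg hk1]

end LandmarkSpacing

theorem natCeil_sub_one_div_three_bounds {N : ℝ} (hN : 1 ≤ N) :
    N - 1 ≤ 3 * ⌈(N - 1) / 3⌉₊ ∧ 3 * (⌈(N - 1) / 3⌉₊ : ℝ) < N + 2 := by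
  have h1 := Nat.le_ceil ((N - 1) / 3)
  have h2 := Nat.ceil_lt_add_one (by linarith : 0 ≤ (N - 1) / 3)
  constructor <;> linarith

-- With `K ≈ (N - 1) / 3` and `ε ≤ 1 / (N - 1)` the slack is at least `(N - 8) / (3 (N - 1))`.
theorem slack_bounds {N K ε : ℝ} (hN : 10 ≤ N) (hK1 : N - 1 ≤ 3 * K) (hK2 : 3 * K ≤ N + 1)
    (hεN : (N - 1) * ε ≤ 1) :
    0 ≤ 1 - (2 * K + 1) * ε ∧ 2 / 81 * (N - 1) ≤ K * (1 - (2 * K + 1) * ε) := by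
  have hC : N - 8 ≤ 3 * (N - 1) * (1 - (2 * K + 1) * ε) := by
    nlinarith [mul_nonneg (by linarith : (0 : ℝ) ≤ 2 * K + 1) (by linarith : 0 ≤ 1 - (N - 1) * ε)]
  have hC0 : 0 ≤ 1 - (2 * K + 1) * ε := by nlinarith
  exact ⟨hC0, by nlinarith [mul_nonneg hC0 (by linarith : 0 ≤ 3 * K - (N - 1))]⟩

theorem sum_card_filter_add_one {ι κ : Type*} [DecidableEq κ] {s : Finset ι} {t : Finset κ}
    {φ : ι → κ} (hφ : ∀ i ∈ s, φ i ∈ t) :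
    ∑ k ∈ t, ((#{i ∈ s | φ i = k} : ℝ) + 1) = #s + #t := by
  rw [sum_add_distrib, ← Nat.cast_sum, ← card_eq_sum_card_fiberwise hφ]
  simp

theorem weighted_sums_bounds {ι : Type*} {t : Finset ι} {w x y : ι → ℝ} {L U : ℝ}
    (hw : ∀ k ∈ t, 0 ≤ w k) (hU : ∀ k ∈ t, x k ≤ U ∧ y k ≤ U) (hL : ∀ k ∈ t, L ≤ x k + y k) :
    (∑ k ∈ t, w k) * L / 2 ≤ max (∑ k ∈ t, w k * x k) (∑ k ∈ t, w k * y k) ∧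
      max (∑ k ∈ t, w k * x k) (∑ k ∈ t, w k * y k) ≤ (∑ k ∈ t, w k) * U := by
  have hsum : (∑ k ∈ t, w k) * L ≤ ∑ k ∈ t, w k * x k + ∑ k ∈ t, w k * y k := by
    rw [sum_mul, ← sum_add_distrib]
    exact sum_le_sum fun k hk => by nlinarith [hw k hk, hL k hk]
  have hx : ∑ k ∈ t, w k * x k ≤ (∑ k ∈ t, w k) * U := by
    rw [sum_mul]
    exact sum_le_sum fun k hk => mul_le_mul_of_nonneg_left (hU k hk).1 (hw k hk)
  have hy : ∑ k ∈ t, w k * y k ≤ (∑ k ∈ t, w k) * U := by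
    rw [sum_mul]
    exact sum_le_sum fun k hk => mul_le_mul_of_nonneg_left (hU k hk).2 (hw k hk)
  exact ⟨by linarith [le_max_left (∑ k ∈ t, w k * x k) (∑ k ∈ t, w k * y k),
    le_max_right (∑ k ∈ t, w k * x k) (∑ k ∈ t, w k * y k)], max_le hx hy⟩

theorem stmt_18_general
    (n' n : ℕ) (hn' : 10 ≤ n')
    (p' : ℕ → ℝ)
    (hp'0 : 0 ≤ p' 1) (hp'1 : p' n' ≤ 1)
    (hp'mono : ∀ k ∈ Finset.Ico 1 n', p' k < p' (k + 1))
    (ε : ℝ)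
    (hε : IsLeast {x : ℝ | ∃ k, 1 ≤ k ∧ k < n' ∧ x = p' (k + 1) - p' k} ε)
    (b r : ℕ → ℝ)
    (hb : ∀ k, b k = ∑ ℓ ∈ Finset.Ico 1 k, (2 - (p' (ℓ + 1) + p' ℓ)) / (p' (ℓ + 1) - p' ℓ))
    (hr : ∀ k, r k = ∑ ℓ ∈ Finset.Ico k n', (p' (ℓ + 1) + p' ℓ) / (p' (ℓ + 1) - p' ℓ))
    (φ : ℕ → ℕ)
    (hφmem : ∀ i ∈ Finset.Icc 1 n, φ i ∈ Finset.Icc 1 n')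
    (R B M : ℝ)
    (hR : R = ∑ k ∈ Finset.Icc 1 n',
        ((((Finset.Icc 1 n).filter (fun i => φ i = k)).card : ℝ) + 1) * r k)
    (hB : B = ∑ k ∈ Finset.Icc 1 n',
        ((((Finset.Icc 1 n).filter (fun i => φ i = k)).card : ℝ) + 1) * b k)
    (hM : M = max R B)
    (K : ℕ) (hK : K = ⌈((n' : ℝ) - 1) / 3⌉₊)
    (ha : ∀ k, 1 ≤ k → k ≤ K →
        p' (k + 1) - p' k ≤ 2 * ε ∧ p' (n' - k + 1) - p' (n' - k) ≤ 2 * ε)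
    (hb1 : p' (K + 1) ≤ (2 * (K : ℝ) + 1) * ε)
    (hb2 : 1 - (2 * (K : ℝ) + 1) * ε ≤ p' (n' - K)) :
    1 / 81 * ((n' : ℝ) - 1) * ((n : ℝ) + (n' : ℝ)) / ε ≤ M ∧
      M ≤ 2 * ((n' : ℝ) - 1) * ((n : ℝ) + (n' : ℝ)) / ε := by
  have hsp := LandmarkSpacing.of_isLeast hp'0 hp'1 hp'mono hε
  have hN : (10 : ℝ) ≤ n' := by exact_mod_cast hn'
  obtain ⟨hK1, hK2⟩ := natCeil_sub_one_div_three_bounds (by linarith : (1 : ℝ) ≤ n')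
  rw [← hK] at hK1 hK2
  have h3K : 3 * K ≤ n' + 1 := by
    have : 3 * K < n' + 2 := by exact_mod_cast hK2
    omega
  obtain ⟨hslack, hKslack⟩ := slack_bounds hN hK1 (by exact_mod_cast h3K)
    (hsp.sub_one_mul_le_one (by omega))
  obtain rfl : b = blueSum p' := funext hb
  obtain rfl : r = redSum n' p' := funext hr
  obtain ⟨hlow, hup⟩ := weighted_sums_bounds (t := Icc 1 n')
    (w := fun k => (#{i ∈ Icc 1 n | φ i = k} : ℝ) + 1) (fun _ _ => by positivity)
    (fun k hk => ⟨hsp.redSum_le (mem_Icc.1 hk).1 (by omega),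
      hsp.blueSum_le (mem_Icc.1 hk).2 (by omega)⟩)
    fun k hk => hsp.le_redSum_add_blueSum (by omega) (by linarith) hb1 hb2 ha
      (mem_Icc.1 hk).1 (mem_Icc.1 hk).2
  rw [sum_card_filter_add_one hφmem, Nat.card_Icc, Nat.card_Icc] at hlow hup
  have hL : 2 / 81 * ((n' : ℝ) - 1) / ε ≤ K * ((1 - (2 * K + 1) * ε) / ε) := by
    rw [← mul_div_assoc]
    exact div_le_div_of_nonneg_right hKslack hsp.pos.le
  subst hR hB hM
  push_cast [Nat.add_sub_cancel] at hlow hup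
  constructor
  · calc 1 / 81 * ((n' : ℝ) - 1) * (n + n') / ε = (n + n') * (2 / 81 * (n' - 1) / ε) / 2 := by
          ring
      _ ≤ _ := by gcongr
      _ ≤ _ := hlow
  · refine hup.trans_eq ?_
    field_simp [hsp.pos.ne']

theorem stmt_18
    (n' n : ℕ) (hn' : 10 ≤ n') (hn : 2 ≤ n)
    (p' : ℕ → ℝ)
    (hp'0 : 0 ≤ p' 1) (hp'1 : p' n' ≤ 1)
    (hp'mono : ∀ k ∈ Finset.Ico 1 n', p' k < p' (k + 1))
    (ε : ℝ)
    (hε : IsLeast {x : ℝ | ∃ k, 1 ≤ k ∧ k < n' ∧ x = p' (k + 1) - p' k} ε)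
    (p : ℕ → ℝ)
    (hp01 : ∀ i ∈ Finset.Icc 1 n, 0 ≤ p i ∧ p i ≤ 1)
    (hpmono : ∀ i ∈ Finset.Ico 1 n, p i ≤ p (i + 1))
    (b r : ℕ → ℝ)
    (hb : ∀ k, b k = ∑ ℓ ∈ Finset.Ico 1 k, (2 - (p' (ℓ + 1) + p' ℓ)) / (p' (ℓ + 1) - p' ℓ))
    (hr : ∀ k, r k = ∑ ℓ ∈ Finset.Ico k n', (p' (ℓ + 1) + p' ℓ) / (p' (ℓ + 1) - p' ℓ))
    (φ : ℕ → ℕ)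
    (hφmem : ∀ i ∈ Finset.Icc 1 n, φ i ∈ Finset.Icc 1 n')
    (hφmax : ∀ i ∈ Finset.Icc 1 n, ∀ k ∈ Finset.Icc 1 n',
        p i * b k + (1 - p i) * r k ≤ p i * b (φ i) + (1 - p i) * r (φ i))
    (R B M : ℝ)
    (hR : R = ∑ k ∈ Finset.Icc 1 n',
        ((((Finset.Icc 1 n).filter (fun i => φ i = k)).card : ℝ) + 1) * r k)
    (hB : B = ∑ k ∈ Finset.Icc 1 n',
        ((((Finset.Icc 1 n).filter (fun i => φ i = k)).card : ℝ) + 1) * b k)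
    (hM : M = max R B)
    (K : ℕ) (hK : K = ⌈((n' : ℝ) - 1) / 3⌉₊)
    (ha : ∀ k, 1 ≤ k → k ≤ K →
        p' (k + 1) - p' k ≤ 2 * ε ∧ p' (n' - k + 1) - p' (n' - k) ≤ 2 * ε)
    (hb1 : p' (K + 1) ≤ (2 * (K : ℝ) + 1) * ε)
    (hb2 : 1 - (2 * (K : ℝ) + 1) * ε ≤ p' (n' - K)) :
    1 / 81 * ((n' : ℝ) - 1) * ((n : ℝ) + (n' : ℝ)) / ε ≤ M ∧
      M ≤ 2 * ((n' : ℝ) - 1) * ((n : ℝ) + (n' : ℝ)) / ε :=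
  stmt_18_general n' n hn' p' hp'0 hp'1 hp'mono ε hε b r hb hr φ hφmem R B M hR hB hM K hK ha hb1
    hb2
end
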